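/- arXiv:2301.05605 — 12 statements merged into one kernel-verified Lean document; each statement's English description precedes it below -/
import Mathlib

section
/- Let U be a type with decidable equality, let p > 1 be a real, let η ∈ (0,1), let Z ≥ 0 be a real, and set β = (η/p)^p. For all lists A, B, C with entries in U such that B is a suffix of A: if (1 − β)·(‖A‖_p^p + Z) ≤ ‖B‖_p^p + Z, then (1 − η)·(‖A ++ C‖_p^p + Z) ≤ ‖B ++ C‖_p^p + Z, where ++ denotes list concatenation (appending C after A, respectively after B). -/
/-- The `ℓ_p` frequency moment of a list: the sum over distinct elements `a`
of the `p`-th (real) power of the number of occurrences of `a`. -/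
noncomputable def lpMoment {U : Type*} [DecidableEq U] (p : ℝ) (S : List U) : ℝ :=
  ∑ a ∈ S.toFinset, (S.count a : ℝ) ^ p

section Aux

lemma lpMoment_eq_sum {U : Type*} [DecidableEq U] {p : ℝ} (hp : p ≠ 0) (S : List U)
    {T : Finset U} (hT : S.toFinset ⊆ T) :
    lpMoment p S = ∑ a ∈ T, (S.count a : ℝ) ^ p := by
  refine Finset.sum_subset hT fun x _ hx => ?_
  rw [List.count_eq_zero_of_not_mem (by simpa [List.mem_toFinset] using hx)]
  simp [Real.zero_rpow hp]

/-- Tangent-line inequality for `rpow`, `p ≥ 1`. -/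
lemma rpow_sub_rpow_le_tangent {p x y : ℝ} (hy : 0 ≤ y) (hyx : y ≤ x) (hp : 1 ≤ p) :
    x ^ p - y ^ p ≤ p * x ^ (p - 1) * (x - y) := by
  have hx : 0 ≤ x := hy.trans hyx
  rcases eq_or_lt_of_le hx with hx0 | hx0
  · have hy0 : y = 0 := le_antisymm (hyx.trans hx0.ge) hy
    have hp0 : p ≠ 0 := by linarith
    simp [← hx0, hy0, Real.zero_rpow hp0]
  · have hs : (-1 : ℝ) ≤ y / x - 1 := by
      have : 0 ≤ y / x := div_nonneg hy hx
      linarith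
    have hB := one_add_mul_self_le_rpow_one_add hs hp
    rw [add_sub_cancel] at hB
    have hdiv : (y / x) ^ p = y ^ p / x ^ p := Real.div_rpow hy hx p
    rw [hdiv] at hB
    have hxp : 0 < x ^ p := Real.rpow_pos_of_pos hx0 p
    have hB' : (1 + p * (y / x - 1)) * x ^ p ≤ y ^ p := by
      rw [← le_div_iff₀ hxp] at *; exact hB
    have hxp1 : x ^ (p - 1) = x ^ p / x := by
      rw [Real.rpow_sub hx0, Real.rpow_one]
    have hexp : (1 + p * (y / x - 1)) * x ^ p = x ^ p + p * (x ^ p / x) * (y - x) := by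
      field_simp
    rw [hexp] at hB'
    rw [hxp1]
    nlinarith [hB']

/-- Superadditivity: `(x - y) ^ p ≤ x ^ p - y ^ p` for `0 ≤ y ≤ x`, `1 ≤ p`. -/
lemma rpow_sub_le_rpow_sub_rpow {p x y : ℝ} (hy : 0 ≤ y) (hyx : y ≤ x) (hp : 1 ≤ p) :
    (x - y) ^ p ≤ x ^ p - y ^ p := by
  have h := NNReal.add_rpow_le_rpow_add ((x - y).toNNReal) (y.toNNReal) hp
  have hxy : 0 ≤ x - y := sub_nonneg.2 hyx
  have hsum : (x - y).toNNReal + y.toNNReal = x.toNNReal := by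
    ext
    simp [Real.toNNReal_of_nonneg hxy, Real.toNNReal_of_nonneg hy,
      Real.toNNReal_of_nonneg (hy.trans hyx)]
  rw [hsum] at h
  have := (NNReal.coe_le_coe).2 h
  push_cast [NNReal.coe_rpow, Real.coe_toNNReal _ hxy, Real.coe_toNNReal _ hy,
    Real.coe_toNNReal _ (hy.trans hyx)] at this
  linarith

end Aux

/-- smoothness of the `ℓ_p` frequency moment (shifted by `Z ≥ 0`)
for `p > 1`, with `β = (η/p)^p`. -/
theorem stmt_2 {U : Type*} [DecidableEq U] (p η Z : ℝ) (hp : 1 < p)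
    (hη : η ∈ Set.Ioo (0 : ℝ) 1) (hZ : 0 ≤ Z)
    (β : ℝ) (hβ : β = (η / p) ^ p)
    (A B C : List U) (hBA : B <:+ A)
    (h : (1 - β) * (lpMoment p A + Z) ≤ lpMoment p B + Z) :
    (1 - η) * (lpMoment p (A ++ C) + Z) ≤ lpMoment p (B ++ C) + Z := by
  obtain ⟨hη0, hη1⟩ := hη
  have hp0 : (0 : ℝ) < p := by linarith
  have hpne : p ≠ 0 := ne_of_gt hp0
  have hp1 : (1 : ℝ) ≤ p := hp.le
  -- the common support
  set T : Finset U := (A ++ C).toFinset with hT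
  have hBsubA : B ⊆ A := hBA.sublist.subset
  have hAsub : A.toFinset ⊆ T := by
    intro x hx; simp only [hT, List.mem_toFinset] at *
    exact List.mem_append_left C hx
  have hBsub : B.toFinset ⊆ T := by
    intro x hx; simp only [hT, List.mem_toFinset] at *
    exact List.mem_append_left C (hBsubA hx)
  have hBCsub : (B ++ C).toFinset ⊆ T := by
    intro x hx; simp only [hT, List.mem_toFinset, List.mem_append] at *
    exact hx.imp (fun h => hBsubA h) id
  -- counts as real functions
  set f : U → ℝ := fun a => (A.count a : ℝ) with hf
  set g : U → ℝ := fun a => (B.count a : ℝ) with hg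
  set c : U → ℝ := fun a => (C.count a : ℝ) with hc
  have hgf : ∀ a, g a ≤ f a := fun a => by
    simp only [hg, hf]
    exact_mod_cast hBA.sublist.count_le a
  have hg0 : ∀ a, 0 ≤ g a := fun a => Nat.cast_nonneg _
  have hf0 : ∀ a, 0 ≤ f a := fun a => Nat.cast_nonneg _
  have hc0 : ∀ a, 0 ≤ c a := fun a => Nat.cast_nonneg _
  -- express all four moments as sums over T
  have eA : lpMoment p A = ∑ a ∈ T, f a ^ p := lpMoment_eq_sum hpne A hAsub
  have eB : lpMoment p B = ∑ a ∈ T, g a ^ p := lpMoment_eq_sum hpne B hBsub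
  have eAC : lpMoment p (A ++ C) = ∑ a ∈ T, (f a + c a) ^ p := by
    rw [lpMoment_eq_sum hpne (A ++ C) (le_refl T)]
    refine Finset.sum_congr rfl fun a _ => ?_
    rw [List.count_append]; push_cast; rfl
  have eBC : lpMoment p (B ++ C) = ∑ a ∈ T, (g a + c a) ^ p := by
    rw [lpMoment_eq_sum hpne (B ++ C) hBCsub]
    refine Finset.sum_congr rfl fun a _ => ?_
    rw [List.count_append]; push_cast; rfl
  set FA := ∑ a ∈ T, f a ^ p with hFA
  set FB := ∑ a ∈ T, g a ^ p with hFB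
  set FAC := ∑ a ∈ T, (f a + c a) ^ p with hFAC
  set FBC := ∑ a ∈ T, (g a + c a) ^ p with hFBC
  rw [eAC, eBC]
  rw [eA, eB] at h
  -- basic positivity
  have hFAC0 : 0 ≤ FAC :=
    Finset.sum_nonneg fun a _ => Real.rpow_nonneg (by positivity) p
  have hFA_le_FAC : FA ≤ FAC := by
    refine Finset.sum_le_sum fun a _ => ?_
    exact Real.rpow_le_rpow (hf0 a) (by linarith [hc0 a]) (le_of_lt hp0)
  have hFAZ0 : 0 ≤ FA + Z := by
    have : 0 ≤ FA := Finset.sum_nonneg fun a _ => Real.rpow_nonneg (hf0 a) p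
    linarith
  have hβ0 : 0 ≤ β := by rw [hβ]; positivity
  -- budget from hypothesis
  have hbudget : FA - FB ≤ β * (FA + Z) := by
    have e : (1 - β) * (FA + Z) = (FA + Z) - β * (FA + Z) := by ring
    linarith [h, e ▸ h]
  -- Step 1: difference bound by tangent lines
  have step1 : FAC - FBC ≤ ∑ a ∈ T, p * ((f a - g a) * (f a + c a) ^ (p - 1)) := by
    rw [hFAC, hFBC, ← Finset.sum_sub_distrib]
    refine Finset.sum_le_sum fun a _ => ?_
    have := rpow_sub_rpow_le_tangent (x := f a + c a) (y := g a + c a)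
      (by linarith [hg0 a, hc0 a]) (by linarith [hgf a]) hp1
    calc (f a + c a) ^ p - (g a + c a) ^ p
        ≤ p * (f a + c a) ^ (p - 1) * ((f a + c a) - (g a + c a)) := this
      _ = p * ((f a - g a) * (f a + c a) ^ (p - 1)) := by ring
  rw [← Finset.mul_sum] at step1
  -- Step 2: Hölder
  set q : ℝ := p / (p - 1) with hq
  have hpq : p.HolderConjugate q := Real.HolderConjugate.conjExponent hp
  have holder := Real.inner_le_Lp_mul_Lq_of_nonneg (s := T) hpq
    (f := fun a => f a - g a) (g := fun a => (f a + c a) ^ (p - 1))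
    (fun a _ => by linarith [hgf a])
    (fun a _ => by exact Real.rpow_nonneg (by linarith [hf0 a, hc0 a]) _)
  have hqexp : ∀ a : U, ((f a + c a) ^ (p - 1)) ^ q = (f a + c a) ^ p := by
    intro a
    rw [← Real.rpow_mul (by linarith [hf0 a, hc0 a])]
    have h1 : p - 1 ≠ 0 := by linarith
    congr 1
    rw [hq]
    field_simp
  have holder' : ∑ a ∈ T, (f a - g a) * (f a + c a) ^ (p - 1)
      ≤ (∑ a ∈ T, (f a - g a) ^ p) ^ (1 / p) * FAC ^ (1 / q) := by
    refine holder.trans (le_of_eq ?_)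
    congr 1
    congr 1
    exact Finset.sum_congr rfl fun a _ => hqexp a
  -- Step 3: bound the p-norm of the differences
  have step3 : ∑ a ∈ T, (f a - g a) ^ p ≤ β * (FA + Z) := by
    have : ∑ a ∈ T, (f a - g a) ^ p ≤ ∑ a ∈ T, (f a ^ p - g a ^ p) := by
      refine Finset.sum_le_sum fun a _ => ?_
      exact rpow_sub_le_rpow_sub_rpow (hg0 a) (hgf a) hp1
    rw [Finset.sum_sub_distrib] at this
    calc ∑ a ∈ T, (f a - g a) ^ p ≤ FA - FB := this
      _ ≤ β * (FA + Z) := hbudget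
  -- combine
  have hdiff0 : 0 ≤ ∑ a ∈ T, (f a - g a) ^ p :=
    Finset.sum_nonneg fun a _ => Real.rpow_nonneg (by linarith [hgf a]) p
  have hXpos : (0:ℝ) ≤ FAC + Z := by linarith
  have step4 : (∑ a ∈ T, (f a - g a) ^ p) ^ (1 / p) ≤ (η / p) * (FAC + Z) ^ (1 / p) := by
    calc (∑ a ∈ T, (f a - g a) ^ p) ^ (1 / p)
        ≤ (β * (FAC + Z)) ^ (1 / p) := by
          refine Real.rpow_le_rpow hdiff0 ?_ (one_div_nonneg.2 hp0.le)
          refine step3.trans ?_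
          exact mul_le_mul_of_nonneg_left (by linarith) hβ0
      _ = β ^ (1 / p) * (FAC + Z) ^ (1 / p) := Real.mul_rpow hβ0 hXpos
      _ = (η / p) * (FAC + Z) ^ (1 / p) := by
          congr 1
          rw [hβ, ← Real.rpow_mul (div_nonneg hη0.le hp0.le)]
          rw [mul_one_div, div_self hpne, Real.rpow_one]
  have hq0 : 0 < q := hpq.symm.pos
  have step5 : FAC ^ (1 / q) ≤ (FAC + Z) ^ (1 / q) :=
    Real.rpow_le_rpow hFAC0 (by linarith) (one_div_nonneg.2 hq0.le)
  have hsum1 : 1 / p + 1 / q = 1 := by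
    rw [one_div, one_div]; exact hpq.inv_add_inv_eq_one
  have hXsplit : (FAC + Z) ^ (1 / p) * (FAC + Z) ^ (1 / q) = FAC + Z := by
    rw [← Real.rpow_add' hXpos (by rw [hsum1]; norm_num), hsum1, Real.rpow_one]
  have main : FAC - FBC ≤ η * (FAC + Z) := by
    have h1 : FAC - FBC ≤ p * ((η / p) * (FAC + Z) ^ (1 / p) * ((FAC + Z) ^ (1 / q))) := by
      refine step1.trans ?_
      have h2 : ∑ a ∈ T, (f a - g a) * (f a + c a) ^ (p - 1)
          ≤ (η / p) * (FAC + Z) ^ (1 / p) * ((FAC + Z) ^ (1 / q)) := by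
        refine holder'.trans ?_
        have hnn : (0:ℝ) ≤ (FAC + Z) ^ (1 / q) := Real.rpow_nonneg hXpos _
        have hnn2 : (0:ℝ) ≤ (∑ a ∈ T, (f a - g a) ^ p) ^ (1 / p) := Real.rpow_nonneg hdiff0 _
        calc (∑ a ∈ T, (f a - g a) ^ p) ^ (1 / p) * FAC ^ (1 / q)
            ≤ ((η / p) * (FAC + Z) ^ (1 / p)) * (FAC + Z) ^ (1 / q) := by
              exact mul_le_mul step4 step5 (Real.rpow_nonneg hFAC0 _)
                (mul_nonneg (div_nonneg hη0.le hp0.le) (Real.rpow_nonneg hXpos _))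
          _ = (η / p) * (FAC + Z) ^ (1 / p) * ((FAC + Z) ^ (1 / q)) := by ring
      exact mul_le_mul_of_nonneg_left h2 hp0.le
    have hpη : p * (η / p) = η := by field_simp
    calc FAC - FBC ≤ p * ((η / p) * (FAC + Z) ^ (1 / p) * ((FAC + Z) ^ (1 / q))) := h1
      _ = p * (η / p) * ((FAC + Z) ^ (1 / p) * (FAC + Z) ^ (1 / q)) := by ring
      _ = η * ((FAC + Z) ^ (1 / p) * (FAC + Z) ^ (1 / q)) := by rw [hpη]
      _ = η * (FAC + Z) := by rw [hXsplit]
  have e2 : (1 - η) * (FAC + Z) = (FAC + Z) - η * (FAC + Z) := by ring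
  linarith [main, e2]
end

section
/- Let U be a type with decidable equality, let η ∈ (0,1), and let Z ≥ 0 be a real. For all lists A, B, C with entries in U such that B is a suffix of A: if (1 − η)·(‖A‖_0 + Z) ≤ ‖B‖_0 + Z, then (1 − η)·(‖A ++ C‖_0 + Z) ≤ ‖B ++ C‖_0 + Z, where ++ denotes list concatenation. -/
/-- smoothness of the number of distinct elements
`‖S‖₀ = S.toFinset.card` (shifted by `Z ≥ 0`), with parameters `(η, η)`. -/
theorem stmt_4 {U : Type*} [DecidableEq U] (η Z : ℝ)
    (hη : η ∈ Set.Ioo (0 : ℝ) 1) (hZ : 0 ≤ Z)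
    (A B C : List U) (hBA : B <:+ A)
    (h : (1 - η) * ((A.toFinset.card : ℝ) + Z) ≤ (B.toFinset.card : ℝ) + Z) :
    (1 - η) * (((A ++ C).toFinset.card : ℝ) + Z) ≤ ((B ++ C).toFinset.card : ℝ) + Z := by
  obtain ⟨X, rfl⟩ := hBA
  have hsub : B.toFinset ⊆ (X ++ B).toFinset := by
    intro u hu
    simp only [List.toFinset_append, Finset.mem_union] at *
    exact Or.inr hu
  rw [show (X ++ B ++ C).toFinset = (X ++ B).toFinset ∪ C.toFinset from by simp [Finset.union_assoc], show (B ++ C).toFinset = B.toFinset ∪ C.toFinset from by simp]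
  set a := (X ++ B).toFinset
  set b := B.toFinset
  set c := C.toFinset
  have hba : b ⊆ a := hsub
  have h1 : b ∪ c ⊆ a ∪ c := Finset.union_subset_union hba (Finset.Subset.refl _)
  have h2 : a ∪ c ⊆ (b ∪ c) ∪ (a \ b) := by
    intro u hu
    rcases Finset.mem_union.1 hu with hu | hu
    · by_cases hb : u ∈ b
      · exact Finset.mem_union.2 (Or.inl (Finset.mem_union.2 (Or.inl hb)))
      · exact Finset.mem_union.2 (Or.inr (Finset.mem_sdiff.2 ⟨hu, hb⟩))
    · exact Finset.mem_union.2 (Or.inl (Finset.mem_union.2 (Or.inr hu)))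
  have h3 : (a ∪ c).card ≤ (b ∪ c).card + (a \ b).card :=
    (Finset.card_le_card h2).trans (Finset.card_union_le _ _)
  have h4 : (a \ b).card = a.card - b.card := Finset.card_sdiff_of_subset hba
  have h5 : b.card ≤ a.card := Finset.card_le_card hba
  have h6 : b.card ≤ (b ∪ c).card := Finset.card_le_card Finset.subset_union_left
  have key : ((a ∪ c).card : ℝ) + (b.card : ℝ) ≤ ((b ∪ c).card : ℝ) + (a.card : ℝ) := by
    have : (a ∪ c).card + b.card ≤ (b ∪ c).card + a.card := by omega
    exact_mod_cast this
  have h6' : (b.card : ℝ) ≤ ((b ∪ c).card : ℝ) := by exact_mod_cast h6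
  obtain ⟨hη0, hη1⟩ := hη
  nlinarith [h, key, h6', hη0, hη1]
end

section
/- Let U be a finite type, f : U → ℝ with f(x) ≥ 0 for all x, and let p be a real with 0 < p ≤ 2. If a ∈ U satisfies f(a) = max_{x ∈ U} f(x), then f(a)^p · ∑_{x ∈ U} f(x)^2 ≤ f(a)^2 · ∑_{x ∈ U} f(x)^p. In particular, if f(a) > 0 and f(a)^p ≥ (∑_{x ∈ U} f(x)^p)/k for a real k > 0, then f(a)^2 ≥ (∑_{x ∈ U} f(x)^2)/k. -/
/-- for `0 < p ≤ 2`, the maximum-frequency element satisfies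
`f(a)^p · ∑ f(x)^2 ≤ f(a)^2 · ∑ f(x)^p`; in particular a maximum-frequency
`(1/k)`-ℓ_p heavy hitter is a `(1/k)`-ℓ_2 heavy hitter. -/
theorem stmt_7 {U : Type*} [Fintype U] (f : U → ℝ) (hf : ∀ x, 0 ≤ f x)
    (p : ℝ) (hp0 : 0 < p) (hp2 : p ≤ 2)
    (a : U) (ha : ∀ x, f x ≤ f a) :
    f a ^ p * ∑ x, f x ^ (2 : ℝ) ≤ f a ^ (2 : ℝ) * ∑ x, f x ^ p ∧
    (∀ k : ℝ, 0 < k → 0 < f a → (∑ x, f x ^ p) / k ≤ f a ^ p →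
      (∑ x, f x ^ (2 : ℝ)) / k ≤ f a ^ (2 : ℝ)) := by
  have key : f a ^ p * ∑ x, f x ^ (2 : ℝ) ≤ f a ^ (2 : ℝ) * ∑ x, f x ^ p := by
    rw [Finset.mul_sum, Finset.mul_sum]
    apply Finset.sum_le_sum
    intro x _
    rcases eq_or_lt_of_le (hf x) with h0 | h0
    · rw [← h0, Real.zero_rpow hp0.ne', Real.zero_rpow (by norm_num : (2:ℝ) ≠ 0)]
      simp
    have hfa : 0 < f a := lt_of_lt_of_le h0 (ha x)
    calc f a ^ p * f x ^ (2 : ℝ)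
        = f a ^ p * (f x ^ p * f x ^ (2 - p)) := by
          rw [← Real.rpow_add h0]; ring_nf
      _ ≤ f a ^ p * (f x ^ p * f a ^ (2 - p)) := by
          apply mul_le_mul_of_nonneg_left
            (mul_le_mul_of_nonneg_left
              (Real.rpow_le_rpow (hf x) (ha x) (by linarith))
              (Real.rpow_nonneg (hf x) p))
            (Real.rpow_nonneg (hf a) p)
      _ = f a ^ (2 : ℝ) * f x ^ p := by
          rw [mul_comm (f x ^ p), ← mul_assoc, ← Real.rpow_add hfa]; ring_nf
  refine ⟨key, fun k hk hfa hhp => ?_⟩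
  have hap : 0 < f a ^ p := Real.rpow_pos_of_pos hfa p
  rw [div_le_iff₀ hk] at hhp ⊢
  have := mul_le_mul_of_nonneg_left hhp (le_of_lt (Real.rpow_pos_of_pos hfa 2))
  have h2 : f a ^ p * ∑ x, f x ^ (2 : ℝ) ≤ f a ^ p * (f a ^ (2:ℝ) * k) := by
    calc f a ^ p * ∑ x, f x ^ (2 : ℝ) ≤ f a ^ (2:ℝ) * ∑ x, f x ^ p := key
      _ ≤ f a ^ (2:ℝ) * (f a ^ p * k) := mul_le_mul_of_nonneg_left hhp
          (le_of_lt (Real.rpow_pos_of_pos hfa 2))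
      _ = f a ^ p * (f a ^ (2:ℝ) * k) := by ring
  exact le_of_mul_le_mul_left h2 hap
end

section
/- Let U be a nonempty finite type with n = |U|, let f : U → ℝ with f(x) ≥ 0 for all x, let p > 2 be a real, and let k ≥ 1 be a real. If a ∈ U satisfies f(a)^p ≥ (∑_{x ∈ U} f(x)^p)/k, then f(a)^2 ≥ (∑_{x ∈ U} f(x)^2)/(k · n^{1−2/p}). -/
/-- for `p > 2`, a `(1/k)`-ℓ_p heavy hitter is a
`(1/(k·n^{1−2/p}))`-ℓ_2 heavy hitter, where `n = |U|`. -/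
theorem stmt_8 {U : Type*} [Fintype U] [Nonempty U] (f : U → ℝ) (hf : ∀ x, 0 ≤ f x)
    (p k : ℝ) (hp : 2 < p) (hk : 1 ≤ k)
    (a : U) (hheavy : (∑ x, f x ^ p) / k ≤ f a ^ p) :
    (∑ x, f x ^ (2 : ℝ)) / (k * (Fintype.card U : ℝ) ^ (1 - 2 / p)) ≤ f a ^ (2 : ℝ) := by
  have hk0 : (0:ℝ) < k := lt_of_lt_of_le one_pos hk
  have hp0 : (0:ℝ) < p := by linarith
  have hn : (0:ℝ) < (Fintype.card U : ℝ) := by exact_mod_cast Fintype.card_pos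
  have hden : (0:ℝ) < k * (Fintype.card U : ℝ) ^ (1 - 2 / p) := by positivity
  rw [div_le_iff₀ hden]
  -- Hölder / power mean: ∑ f^2 ≤ n^{1-2/p} * (∑ f^p)^{2/p}
  have hhold := Real.inner_le_weight_mul_Lp_of_nonneg (Finset.univ : Finset U)
    (p := p / 2) (by linarith : (1:ℝ) ≤ p / 2) (fun _ => (1:ℝ))
    (fun x => f x ^ (2:ℝ)) (fun _ => zero_le_one) (fun x => Real.rpow_nonneg (hf x) 2)
  simp only [one_mul, Finset.sum_const, Finset.card_univ, nsmul_eq_mul, mul_one] at hhold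
  have hinv : (p / 2)⁻¹ = 2 / p := inv_div p 2
  have hpow : ∀ x : U, (f x ^ (2:ℝ)) ^ (p / 2) = f x ^ p := by
    intro x
    rw [← Real.rpow_mul (hf x)]
    congr 1
    ring
  simp only [hpow, hinv] at hhold
  -- bound (∑ f^p)^{2/p} by k * f a ^ 2
  have hSp : (∑ x, f x ^ p) ≤ k * f a ^ p := by
    rw [div_le_iff₀ hk0] at hheavy; linarith [hheavy]
  have hSnn : (0:ℝ) ≤ ∑ x, f x ^ p :=
    Finset.sum_nonneg fun x _ => Real.rpow_nonneg (hf x) p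
  have h2p : (0:ℝ) < 2 / p := by positivity
  have h1 : (∑ x, f x ^ p) ^ (2/p) ≤ (k * f a ^ p) ^ (2/p) :=
    Real.rpow_le_rpow hSnn hSp h2p.le
  have h2 : (k * f a ^ p) ^ (2/p) = k ^ (2/p) * f a ^ (2:ℝ) := by
    rw [Real.mul_rpow hk0.le (Real.rpow_nonneg (hf a) p), ← Real.rpow_mul (hf a)]
    congr 1
    field_simp
  have h3 : k ^ (2/p) ≤ k := by
    nth_rewrite 2 [← Real.rpow_one k]
    exact Real.rpow_le_rpow_of_exponent_le hk (by rw [div_le_one hp0]; linarith)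
  have h4 : (∑ x, f x ^ p) ^ (2/p) ≤ k * f a ^ (2:ℝ) := by
    calc (∑ x, f x ^ p) ^ (2/p) ≤ k ^ (2/p) * f a ^ (2:ℝ) := by rw [← h2]; exact h1
      _ ≤ k * f a ^ (2:ℝ) :=
        mul_le_mul_of_nonneg_right h3 (Real.rpow_nonneg (hf a) 2)
  calc (∑ x, f x ^ (2:ℝ))
      ≤ (Fintype.card U : ℝ) ^ (1 - 2/p) * (∑ x, f x ^ p) ^ (2/p) := hhold
    _ ≤ (Fintype.card U : ℝ) ^ (1 - 2/p) * (k * f a ^ (2:ℝ)) :=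
        mul_le_mul_of_nonneg_left h4 (Real.rpow_nonneg hn.le _)
    _ = f a ^ (2:ℝ) * (k * (Fintype.card U : ℝ) ^ (1 - 2/p)) := by ring
end

section
/- Let U be a type with decidable equality and let S = (a_1,…,a_T) and S' = (a'_1,…,a'_T) be two streams of length T over U (entries in Option U) that agree at every position except possibly one position t ∈ [T]. For each stream define the binary sequence c_j = 1 if a_j ≠ ⊥ and the value a_j does not occur among a_1,…,a_{j−1}, and c_j = 0 otherwise (and analogously c'_j for S'). Then the number of indices j ∈ [T] with c_j ≠ c'_j is at most 5. -/
/-- sensitivity of the first-occurrence indicator stream.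
If two streams `a, a' : Fin T → Option U` agree at every position except
possibly `t`, then the first-occurrence indicator streams `c, c'` differ in
at most `5` positions. -/
theorem stmt_10 {U : Type*} [DecidableEq U] (T : ℕ) (a a' : Fin T → Option U)
    (t : Fin T) (hneigh : ∀ j : Fin T, j ≠ t → a j = a' j)
    (c c' : Fin T → ℕ)
    (hc : ∀ s : Fin T,
      c s = if a s ≠ none ∧ ∀ j : Fin T, j < s → a j ≠ a s then 1 else 0)
    (hc' : ∀ s : Fin T,
      c' s = if a' s ≠ none ∧ ∀ j : Fin T, j < s → a' j ≠ a' s then 1 else 0) :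
    (Finset.univ.filter (fun j : Fin T => c j ≠ c' j)).card ≤ 5 := by
  classical
  set F := Finset.univ.filter (fun j : Fin T => c j ≠ c' j) with hF
  -- basic facts about elements of F other than t
  have key : ∀ s ∈ F.erase t, t < s ∧ (a s = a t ∨ a s = a' t) := by
    intro s hs
    rw [Finset.mem_erase] at hs
    obtain ⟨hst, hsF⟩ := hs
    rw [hF, Finset.mem_filter] at hsF
    have hcs := hsF.2
    have has : a s = a' s := hneigh s hst
    have hts : t < s := by
      rcases lt_trichotomy s t with h | h | h
      · exfalso
        apply hcs
        rw [hc s, hc' s, has]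
        have : (∀ j : Fin T, j < s → a j ≠ a' s) ↔ (∀ j : Fin T, j < s → a' j ≠ a' s) := by
          constructor <;> intro h' j hj <;>
            [rw [← hneigh j (ne_of_lt (hj.trans h))]; rw [hneigh j (ne_of_lt (hj.trans h))]] <;>
            exact h' j hj
        simp only [this]
      · exact absurd h hst
      · exact h
    refine ⟨hts, ?_⟩
    rw [hc s, hc' s, has] at hcs
    by_cases hn : a' s = none
    · simp [hn] at hcs
    · by_cases hP : ∀ j : Fin T, j < s → a j ≠ a' s
      · -- then the primed condition must fail
        by_cases hP' : ∀ j : Fin T, j < s → a' j ≠ a' s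
        · rw [if_pos ⟨hn, hP⟩, if_pos ⟨hn, hP'⟩] at hcs
          exact absurd rfl hcs
        · push_neg at hP'
          obtain ⟨j, hj, hje⟩ := hP'
          have : j = t := by
            by_contra hne
            exact hP j hj (by rw [hneigh j hne]; exact hje)
          right; exact has.trans (this ▸ hje.symm)
      · by_cases hP' : ∀ j : Fin T, j < s → a' j ≠ a' s
        · push_neg at hP
          obtain ⟨j, hj, hje⟩ := hP
          have : j = t := by
            by_contra hne
            exact hP' j hj (by rw [← hneigh j hne]; exact hje)
          left; exact has.trans (this ▸ hje).symm
        · rw [if_neg (fun h => hP h.2), if_neg (fun h => hP' h.2)] at hcs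
          exact absurd rfl hcs
  -- injectivity of a on F.erase t
  have inj : ∀ s ∈ F.erase t, ∀ s' ∈ F.erase t, a s = a s' → s = s' := by
    intro s hs s' hs' hval
    by_contra hne
    -- wlog s < s'
    wlog hlt : s < s' generalizing s s'
    · exact this s' hs' s hs hval.symm (Ne.symm hne) (by omega)
    have h1 := key s hs
    have h2 := key s' hs'
    have hs't : s' ≠ t := (Finset.mem_erase.mp hs').1
    have hst : s ≠ t := (Finset.mem_erase.mp hs).1
    have hmem : s' ∈ F := (Finset.mem_erase.mp hs').2
    rw [hF, Finset.mem_filter] at hmem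
    apply hmem.2
    rw [hc s', hc' s']
    have e1 : ¬ (∀ j : Fin T, j < s' → a j ≠ a s') := by
      push_neg; exact ⟨s, hlt, hval⟩
    have e2 : ¬ (∀ j : Fin T, j < s' → a' j ≠ a' s') := by
      push_neg
      exact ⟨s, hlt, by rw [← hneigh s hst, ← hneigh s' hs't]; exact hval⟩
    simp [e1, e2]
  have h1 : (F.erase t).card ≤ ({a t, a' t} : Finset (Option U)).card := by
    apply Finset.card_le_card_of_injOn (fun s => a s)
    · intro s hs
      rcases (key s hs).2 with h | h <;> simp [h]
    · intro s hs s' hs' h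
      exact inj s hs s' hs' h
  have h2 : ({a t, a' t} : Finset (Option U)).card ≤ 2 := by
    apply (Finset.card_insert_le _ _).trans
    simp
  have h3 : F.card ≤ (F.erase t).card + 1 := by
    by_cases ht : t ∈ F
    · rw [Finset.card_erase_of_mem ht]; omega
    · rw [Finset.erase_eq_of_notMem ht]; omega
  omega
end

section
/- Let U be a type with decidable equality, let a_1,…,a_T be a stream over U (entries in Option U), and let i ≥ 1 be a natural number. For t ∈ [T] and u ∈ U, let F_t(u) denote the number of occurrences of u among a_1,…,a_t. Define c_{i,t} as follows: if a_t = u ≠ ⊥ then c_{i,t} = 1 when F_t(u) = i, c_{i,t} = −1 when F_t(u) = i+1, and c_{i,t} = 0 otherwise; if a_t = ⊥ then c_{i,t} = 0. Then for every t ∈ [T], ∑_{j=1}^{t} c_{i,j} equals the number of values u ∈ U with F_t(u) = i. -/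
/-- the level-`i` count stream sums to the number of elements of
frequency exactly `i`. Here `F t u` is the number of occurrences of `u` among
`a 0, …, a t`, and `c t` is `1` / `-1` / `0` according to whether processing
`a t` makes the frequency of its value become `i` / leave `i`, respectively. -/
theorem stmt_11 {U : Type*} [DecidableEq U] (T : ℕ) (a : Fin T → Option U)
    (i : ℕ) (hi : 1 ≤ i)
    (F : Fin T → U → ℕ)
    (hF : ∀ (t : Fin T) (u : U),
      F t u = (Finset.univ.filter (fun j : Fin T => j ≤ t ∧ a j = some u)).card)
    (c : Fin T → ℤ)
    (hc : ∀ t : Fin T,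
      c t = (a t).elim 0 (fun u =>
        if F t u = i then 1 else if F t u = i + 1 then -1 else 0)) :
    ∀ t : Fin T,
      ∑ j ∈ Finset.univ.filter (fun j : Fin T => j ≤ t), c j
        = (({u : U | F t u = i} : Set U).ncard : ℤ) := by
  -- finiteness of the level sets
  have hfin : ∀ t : Fin T, ({u : U | F t u = i} : Set U).Finite := by
    intro t
    apply Set.Finite.subset ((Set.finite_range a).preimage
      (Set.injOn_of_injective (Option.some_injective U)))
    intro u hu
    simp only [Set.mem_setOf_eq] at hu
    rw [hF] at hu
    have hpos : 0 < (Finset.univ.filter (fun j : Fin T => j ≤ t ∧ a j = some u)).card := by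
      omega
    obtain ⟨j, hj⟩ := Finset.card_pos.mp hpos
    simp only [Finset.mem_filter, Finset.mem_univ, true_and] at hj
    exact ⟨j, hj.2⟩
  -- frequency step
  have hstep : ∀ (t t' : Fin T), (t : ℕ) = (t' : ℕ) + 1 → ∀ u : U,
      F t u = F t' u + (if a t = some u then 1 else 0) := by
    intro t t' ht u
    rw [hF, hF]
    have hsplit : (Finset.univ.filter (fun j : Fin T => j ≤ t ∧ a j = some u))
        = (Finset.univ.filter (fun j : Fin T => j ≤ t' ∧ a j = some u)) ∪
          (Finset.univ.filter (fun j : Fin T => j = t ∧ a j = some u)) := by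
      ext j
      simp only [Finset.mem_filter, Finset.mem_union, Finset.mem_univ, true_and]
      constructor
      · rintro ⟨hle, he⟩
        have hlv : (j : ℕ) ≤ (t : ℕ) := hle
        rcases Nat.lt_or_ge (j : ℕ) (t : ℕ) with h | h
        · exact Or.inl ⟨by rw [Fin.le_def]; omega, he⟩
        · have : j = t := Fin.ext (by omega)
          exact Or.inr ⟨this, he⟩
      · rintro (⟨hle, he⟩ | ⟨hj, he⟩)
        · have hlv : (j : ℕ) ≤ (t' : ℕ) := hle
          exact ⟨by rw [Fin.le_def]; omega, he⟩
        · exact ⟨hj ▸ le_refl t, he⟩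
    have hdisj : Disjoint (Finset.univ.filter (fun j : Fin T => j ≤ t' ∧ a j = some u))
        (Finset.univ.filter (fun j : Fin T => j = t ∧ a j = some u)) := by
      rw [Finset.disjoint_left]
      intro j h1 h2
      simp only [Finset.mem_filter, Finset.mem_univ, true_and] at h1 h2
      have : (j : ℕ) ≤ (t' : ℕ) := h1.1
      have : (j : ℕ) = (t : ℕ) := by rw [h2.1]
      omega
    rw [hsplit, Finset.card_union_of_disjoint hdisj]
    congr 1
    by_cases h : a t = some u
    · have : (Finset.univ.filter (fun j : Fin T => j = t ∧ a j = some u)) = {t} := by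
        ext j
        simp only [Finset.mem_filter, Finset.mem_univ, true_and, Finset.mem_singleton]
        constructor
        · exact fun hj => hj.1
        · rintro rfl; exact ⟨rfl, h⟩
      simp [this, h]
    · have : (Finset.univ.filter (fun j : Fin T => j = t ∧ a j = some u)) = ∅ := by
        ext j
        simp only [Finset.mem_filter, Finset.mem_univ, true_and, Finset.notMem_empty,
          iff_false, not_and]
        rintro rfl; exact h
      simp [this, h]
  -- main induction on the value of t
  suffices H : ∀ n : ℕ, ∀ t : Fin T, (t : ℕ) = n →
      ∑ j ∈ Finset.univ.filter (fun j : Fin T => j ≤ t), c j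
        = (({u : U | F t u = i} : Set U).ncard : ℤ) by
    intro t; exact H t t rfl
  intro n
  induction n with
  | zero =>
    intro t ht
    have hfilter : (Finset.univ.filter (fun j : Fin T => j ≤ t)) = {t} := by
      ext j
      simp only [Finset.mem_filter, Finset.mem_univ, true_and, Finset.mem_singleton]
      constructor
      · intro hj
        have : (j : ℕ) ≤ (t : ℕ) := hj
        exact Fin.ext (by omega)
      · rintro rfl; exact le_refl _
    rw [hfilter, Finset.sum_singleton, hc]
    -- now compute both sides depending on a t
    rcases he : a t with _ | v
    · -- a t = none : all frequencies are 0 < i, set is empty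
      have hs : ({u : U | F t u = i} : Set U) = ∅ := by
        ext u
        simp only [Set.mem_setOf_eq, Set.mem_empty_iff_false, iff_false]
        intro hu
        rw [hF] at hu
        have hpos : 0 < (Finset.univ.filter (fun j : Fin T => j ≤ t ∧ a j = some u)).card := by
          omega
        obtain ⟨j, hj⟩ := Finset.card_pos.mp hpos
        simp only [Finset.mem_filter, Finset.mem_univ, true_and] at hj
        have : (j : ℕ) ≤ (t : ℕ) := hj.1
        have hjt : j = t := Fin.ext (by omega)
        rw [hjt, he] at hj
        exact Option.some_ne_none u hj.2.symm
      simp [hs]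
    · -- a t = some v
      have hFv : ∀ u : U, F t u = if u = v then 1 else 0 := by
        intro u
        rw [hF]
        have : (Finset.univ.filter (fun j : Fin T => j ≤ t ∧ a j = some u))
            = if u = v then {t} else ∅ := by
          split_ifs with h
          · subst h
            ext j
            simp only [Finset.mem_filter, Finset.mem_univ, true_and, Finset.mem_singleton]
            constructor
            · intro hj
              have : (j : ℕ) ≤ (t : ℕ) := hj.1
              exact Fin.ext (by omega)
            · rintro rfl; exact ⟨le_refl _, he⟩
          · ext j
            simp only [Finset.mem_filter, Finset.mem_univ, true_and, Finset.notMem_empty,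
              iff_false, not_and]
            intro hj
            have : (j : ℕ) ≤ (t : ℕ) := hj
            have hjt : j = t := Fin.ext (by omega)
            rw [hjt, he]
            intro hcon
            exact h (Option.some_injective U hcon).symm
        rw [this]
        split_ifs <;> simp
      have hs : ({u : U | F t u = i} : Set U) = if i = 1 then {v} else ∅ := by
        ext u
        rw [Set.mem_setOf_eq, hFv u]
        split_ifs with h1 h2 <;> simp_all <;> omega
      simp only [Option.elim]
      rw [hFv v, if_pos rfl, hs]
      by_cases h1 : i = 1
      · subst h1; simp
      · rw [if_neg h1, if_neg (by omega : ¬(1:ℕ) = i),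
          if_neg (by omega : ¬(1:ℕ) = i+1)]
        simp
  | succ n ih =>
    intro t ht
    have hnT : n < T := by have := t.isLt; omega
    set t' : Fin T := ⟨n, hnT⟩ with ht'
    have htt' : (t : ℕ) = (t' : ℕ) + 1 := by simp [ht', ht]
    have hprev := ih t' rfl
    have hfilter : (Finset.univ.filter (fun j : Fin T => j ≤ t))
        = insert t (Finset.univ.filter (fun j : Fin T => j ≤ t')) := by
      ext j
      simp only [Finset.mem_filter, Finset.mem_univ, true_and, Finset.mem_insert]
      constructor
      · intro hj
        have hlv : (j : ℕ) ≤ (t : ℕ) := hj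
        rcases Nat.lt_or_ge (j : ℕ) (t : ℕ) with h | h
        · exact Or.inr (by rw [Fin.le_def]; omega)
        · exact Or.inl (Fin.ext (by omega))
      · rintro (rfl | hj)
        · exact le_refl _
        · have : (j : ℕ) ≤ (t' : ℕ) := hj
          rw [Fin.le_def]; omega
    have hnotmem : t ∉ (Finset.univ.filter (fun j : Fin T => j ≤ t')) := by
      simp only [Finset.mem_filter, Finset.mem_univ, true_and]
      intro h
      have : (t : ℕ) ≤ (t' : ℕ) := h
      omega
    rw [hfilter, Finset.sum_insert hnotmem, hprev]
    -- now case on a t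
    rcases he : a t with _ | v
    · -- empty timestamp
      have hct : c t = 0 := by rw [hc, he]; rfl
      have hFsame : ∀ u : U, F t u = F t' u := by
        intro u
        rw [hstep t t' htt' u, he]
        simp
      have hs : ({u : U | F t u = i} : Set U) = {u : U | F t' u = i} := by
        ext u; simp [hFsame u]
      rw [hct, hs]; ring
    · -- a t = some v
      have hct : c t = if F t v = i then 1 else if F t v = i + 1 then -1 else 0 := by
        rw [hc, he]; rfl
      have hFsame : ∀ u : U, u ≠ v → F t u = F t' u := by
        intro u hu
        rw [hstep t t' htt' u, he]
        have : some v ≠ some u := fun h => hu (Option.some_injective U h).symm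
        simp [this]
      have hFv : F t v = F t' v + 1 := by
        rw [hstep t t' htt' v, he]
        simp
      by_cases h1 : F t v = i
      · -- set gains v
        have hv' : F t' v ≠ i := by omega
        have hs : ({u : U | F t u = i} : Set U) = insert v {u : U | F t' u = i} := by
          ext u
          simp only [Set.mem_setOf_eq, Set.mem_insert_iff]
          by_cases hu : u = v
          · subst hu; simp [h1]
          · simp [hFsame u hu, hu]
        have hvnot : v ∉ ({u : U | F t' u = i} : Set U) := hv'
        have hfin' : ({u : U | F t' u = i} : Set U).Finite := hfin t'
        rw [hct, if_pos h1, hs, Set.ncard_insert_of_notMem hvnot hfin']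
        push_cast
        ring
      · by_cases h2 : F t v = i + 1
        · -- set loses v
          have hv' : F t' v = i := by omega
          have hs : ({u : U | F t' u = i} : Set U) = insert v {u : U | F t u = i} := by
            ext u
            simp only [Set.mem_setOf_eq, Set.mem_insert_iff]
            by_cases hu : u = v
            · subst hu; simp [hv']
            · simp [hFsame u hu, hu]
          have hvnot : v ∉ ({u : U | F t u = i} : Set U) := by
            simp only [Set.mem_setOf_eq]; omega
          rw [hct, if_neg h1, if_pos h2, hs, Set.ncard_insert_of_notMem hvnot (hfin t)]
          push_cast
          ring
        · -- no change
          have hv' : F t' v ≠ i := by omega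
          have hs : ({u : U | F t u = i} : Set U) = {u : U | F t' u = i} := by
            ext u
            simp only [Set.mem_setOf_eq]
            by_cases hu : u = v
            · subst hu; simp [h1, hv']
            · rw [hFsame u hu]
          rw [hct, if_neg h1, if_neg h2, hs]
          ring
end

section
/- Let U be a type with decidable equality, let i ≥ 1 be a natural number, and let S = (a_1,…,a_T) and S' = (a'_1,…,a'_T) be two streams of length T over U (entries in Option U) that agree at every position except possibly one position t ∈ [T]. Define c_{i,j} from S as follows: letting F_j(u) be the number of occurrences of u among a_1,…,a_j, set c_{i,j} = 1 if a_j = u ≠ ⊥ and F_j(u) = i, c_{i,j} = −1 if a_j = u ≠ ⊥ and F_j(u) = i+1, and c_{i,j} = 0 otherwise; define c'_{i,j} analogously from S'. Then ∑_{j=1}^{T} |c_{i,j} − c'_{i,j}| ≤ 8. -/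
namespace Stmt12Aux

variable {U : Type*} [DecidableEq U]

def g (i n : ℕ) : ℤ := if n = i then 1 else if n = i + 1 then -1 else 0

def cnt {T : ℕ} (a : Fin T → Option U) (s : Fin T) (u : U) : ℕ :=
  (Finset.univ.filter (fun j : Fin T => j ≤ s ∧ a j = some u)).card

def cs {T : ℕ} (i : ℕ) (a : Fin T → Option U) (s : Fin T) : ℤ :=
  (a s).elim 0 (fun u => g i (cnt a s u))

lemma g_eq_zero {i n : ℕ} (h1 : n ≠ i) (h2 : n ≠ i + 1) : g i n = 0 := by
  unfold g; rw [if_neg h1, if_neg h2]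

lemma w_i (i : ℕ) (hi : 1 ≤ i) : |g i i - g i (i - 1)| = 1 := by
  have h1 : g i i = 1 := by unfold g; rw [if_pos rfl]
  have h2 : g i (i - 1) = 0 := g_eq_zero (by omega) (by omega)
  rw [h1, h2]; norm_num

lemma w_i1 (i : ℕ) : |g i (i + 1) - g i (i + 1 - 1)| = 2 := by
  have h1 : g i (i + 1) = -1 := by unfold g; rw [if_neg (by omega), if_pos rfl]
  have h2 : g i (i + 1 - 1) = 1 := by
    have h : i + 1 - 1 = i := by omega
    rw [h]; unfold g; rw [if_pos rfl]
  rw [h1, h2]; norm_num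

lemma w_i2 (i : ℕ) : |g i (i + 2) - g i (i + 2 - 1)| = 1 := by
  have h1 : g i (i + 2) = 0 := g_eq_zero (by omega) (by omega)
  have h2 : g i (i + 2 - 1) = -1 := by
    have h : i + 2 - 1 = i + 1 := by omega
    rw [h]; unfold g; rw [if_neg (by omega), if_pos rfl]
  rw [h1, h2]; norm_num

lemma bound_aux (i : ℕ) (hi : 1 ≤ i) (k : ℕ) (s : Finset ℕ) (hs : ∀ n ∈ s, k < n) :
    |g i k| + ∑ n ∈ s, |g i n - g i (n - 1)| ≤ 4 := by
  have hsum : ∑ n ∈ s, |g i n - g i (n - 1)| =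
      ∑ n ∈ s.filter (fun n => |g i n - g i (n - 1)| ≠ 0), |g i n - g i (n - 1)| :=
    (Finset.sum_filter_ne_zero s).symm
  have hsub : s.filter (fun n => |g i n - g i (n - 1)| ≠ 0) ⊆
      (({i, i + 1, i + 2} : Finset ℕ).filter (fun n => k < n)) := by
    intro n hn
    rw [Finset.mem_filter] at hn ⊢
    obtain ⟨hns, hnz⟩ := hn
    refine ⟨?_, hs n hns⟩
    by_contra hmem
    simp only [Finset.mem_insert, Finset.mem_singleton] at hmem
    push_neg at hmem
    obtain ⟨h1, h2, h3⟩ := hmem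
    have e1 : g i n = 0 := g_eq_zero h1 h2
    have e2 : g i (n - 1) = 0 := g_eq_zero (by omega) (by omega)
    rw [e1, e2] at hnz
    simp at hnz
  have hstep : ∑ n ∈ s, |g i n - g i (n - 1)| ≤
      ∑ n ∈ (({i, i + 1, i + 2} : Finset ℕ).filter (fun n => k < n)),
        |g i n - g i (n - 1)| := by
    rw [hsum]
    exact Finset.sum_le_sum_of_subset_of_nonneg hsub (fun n _ _ => abs_nonneg _)
  by_cases hk : k = i
  · have hgk : |g i k| = 1 := by
      rw [hk]
      have h : g i i = 1 := by unfold g; rw [if_pos rfl]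
      rw [h]; norm_num
    have hsub2 : (({i, i + 1, i + 2} : Finset ℕ).filter (fun n => k < n)) ⊆
        ({i + 1, i + 2} : Finset ℕ) := by
      intro n hn
      simp only [Finset.mem_filter, Finset.mem_insert, Finset.mem_singleton] at hn ⊢
      omega
    have hsum2 : ∑ n ∈ ({i + 1, i + 2} : Finset ℕ), |g i n - g i (n - 1)| = 3 := by
      rw [Finset.sum_insert (by simp), Finset.sum_singleton, w_i1, w_i2]
      norm_num
    have hmono : ∑ n ∈ (({i, i + 1, i + 2} : Finset ℕ).filter (fun n => k < n)),
        |g i n - g i (n - 1)| ≤ ∑ n ∈ ({i + 1, i + 2} : Finset ℕ), |g i n - g i (n - 1)| :=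
      Finset.sum_le_sum_of_subset_of_nonneg hsub2 (fun n _ _ => abs_nonneg _)
    rw [hsum2] at hmono
    have := le_trans hstep hmono
    rw [hgk]; linarith
  · by_cases hk1 : k = i + 1
    · have hgk : |g i k| = 1 := by
        rw [hk1]
        have h : g i (i + 1) = -1 := by unfold g; rw [if_neg (by omega), if_pos rfl]
        rw [h]; norm_num
      have hsub2 : (({i, i + 1, i + 2} : Finset ℕ).filter (fun n => k < n)) ⊆
          ({i + 2} : Finset ℕ) := by
        intro n hn
        simp only [Finset.mem_filter, Finset.mem_insert, Finset.mem_singleton] at hn ⊢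
        omega
      have hsum2 : ∑ n ∈ ({i + 2} : Finset ℕ), |g i n - g i (n - 1)| = 1 := by
        rw [Finset.sum_singleton, w_i2]
      have hmono : ∑ n ∈ (({i, i + 1, i + 2} : Finset ℕ).filter (fun n => k < n)),
          |g i n - g i (n - 1)| ≤ ∑ n ∈ ({i + 2} : Finset ℕ), |g i n - g i (n - 1)| :=
        Finset.sum_le_sum_of_subset_of_nonneg hsub2 (fun n _ _ => abs_nonneg _)
      rw [hsum2] at hmono
      have := le_trans hstep hmono
      rw [hgk]; linarith
    · have hgk : |g i k| = 0 := by rw [g_eq_zero hk hk1]; norm_num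
      have hsub2 : (({i, i + 1, i + 2} : Finset ℕ).filter (fun n => k < n)) ⊆
          ({i, i + 1, i + 2} : Finset ℕ) := Finset.filter_subset _ _
      have hsum2 : ∑ n ∈ ({i, i + 1, i + 2} : Finset ℕ), |g i n - g i (n - 1)| = 4 := by
        rw [Finset.sum_insert (by simp), Finset.sum_insert (by simp),
          Finset.sum_singleton, w_i i hi, w_i1, w_i2]
        norm_num
      have hmono : ∑ n ∈ (({i, i + 1, i + 2} : Finset ℕ).filter (fun n => k < n)),
          |g i n - g i (n - 1)| ≤ ∑ n ∈ ({i, i + 1, i + 2} : Finset ℕ), |g i n - g i (n - 1)| :=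
        Finset.sum_le_sum_of_subset_of_nonneg hsub2 (fun n _ _ => abs_nonneg _)
      rw [hsum2] at hmono
      have := le_trans hstep hmono
      rw [hgk]; linarith

lemma cnt_lt {T : ℕ} (a : Fin T → Option U) {j1 j2 : Fin T} (h : j1 < j2) {u : U}
    (ha : a j2 = some u) : cnt a j1 u < cnt a j2 u := by
  apply Finset.card_lt_card
  constructor
  · intro j hj
    rw [Finset.mem_filter] at hj ⊢
    exact ⟨hj.1, le_trans hj.2.1 h.le, hj.2.2⟩
  · intro hsub
    have hmem : j2 ∈ Finset.univ.filter (fun j : Fin T => j ≤ j2 ∧ a j = some u) := by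
      rw [Finset.mem_filter]; exact ⟨Finset.mem_univ _, le_refl _, ha⟩
    have := hsub hmem
    rw [Finset.mem_filter] at this
    exact absurd this.2.1 (not_le.mpr h)

set_option maxHeartbeats 1000000 in
lemma key {T : ℕ} (i : ℕ) (hi : 1 ≤ i) (a : Fin T → Option U) (t : Fin T) :
    ∑ j : Fin T, |cs i a j - cs i (Function.update a t none) j| ≤ 4 := by
  set b := Function.update a t none with hbdef
  cases hat : a t with
  | none =>
      have hba : b = a := by
        rw [hbdef, Function.update_eq_self_iff]; exact hat.symm
      rw [hba]
      simp
  | some u0 =>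
      have hbt : b t = none := by rw [hbdef]; simp
      have hbj : ∀ j : Fin T, j ≠ t → b j = a j := by
        intro j hj; rw [hbdef]; exact Function.update_of_ne hj _ _
      -- counts for u ≠ u0 agree
      have hcnt_ne : ∀ (j : Fin T) (u : U), u ≠ u0 → cnt b j u = cnt a j u := by
        intro j u hu
        unfold cnt
        congr 1
        apply Finset.filter_congr
        intro j' _
        by_cases hj' : j' = t
        · subst hj'
          rw [hbt, hat]
          simp only [and_congr_right_iff]
          intro _
          constructor
          · intro h; cases h
          · intro h; injection h with h'; exact absurd h'.symm hu
        · rw [hbj j' hj']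
      -- counts for positions before t agree
      have hcnt_lo : ∀ (j : Fin T), ¬ t ≤ j → ∀ u : U, cnt b j u = cnt a j u := by
        intro j hj u
        unfold cnt
        congr 1
        apply Finset.filter_congr
        intro j' _
        by_cases hj' : j' = t
        · subst hj'
          simp only [and_congr_right_iff]
          intro hle
          exact absurd hle hj
        · rw [hbj j' hj']
      -- counts for u0 after t: cnt a = cnt b + 1
      have hcnt_hi : ∀ (j : Fin T), t ≤ j → cnt a j u0 = cnt b j u0 + 1 := by
        intro j htj
        have hset : Finset.univ.filter (fun j' : Fin T => j' ≤ j ∧ b j' = some u0) =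
            (Finset.univ.filter (fun j' : Fin T => j' ≤ j ∧ a j' = some u0)).erase t := by
          ext j'
          rw [Finset.mem_erase, Finset.mem_filter, Finset.mem_filter]
          by_cases hj' : j' = t
          · subst hj'
            rw [hbt]
            simp
          · rw [hbj j' hj']
            tauto
        have hmem : t ∈ Finset.univ.filter (fun j' : Fin T => j' ≤ j ∧ a j' = some u0) := by
          rw [Finset.mem_filter]; exact ⟨Finset.mem_univ _, htj, hat⟩
        have hcard := Finset.card_erase_of_mem hmem
        have hpos : 1 ≤ (Finset.univ.filter (fun j' : Fin T => j' ≤ j ∧ a j' = some u0)).card :=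
          Finset.card_pos.mpr ⟨t, hmem⟩
        unfold cnt
        rw [hset, hcard]
        omega
      set k := cnt a t u0 with hkdef
      -- value at t
      have hdt : |cs i a t - cs i b t| = |g i k| := by
        have h1 : cs i a t = g i k := by unfold cs; rw [hat]; rfl
        have h2 : cs i b t = 0 := by unfold cs; rw [hbt]; rfl
        rw [h1, h2, sub_zero]
      -- the set of relevant positions
      set S := Finset.univ.filter (fun j : Fin T => t < j ∧ a j = some u0) with hSdef
      have hSsub : S ⊆ Finset.univ.erase t := by
        intro j hj
        rw [hSdef, Finset.mem_filter] at hj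
        exact Finset.mem_erase.mpr ⟨ne_of_gt hj.2.1, Finset.mem_univ _⟩
      have hzero : ∀ j ∈ Finset.univ.erase t, j ∉ S → |cs i a j - cs i b j| = 0 := by
        intro j hj hjS
        rw [Finset.mem_erase] at hj
        rw [hSdef, Finset.mem_filter] at hjS
        push_neg at hjS
        by_cases htj : t < j
        · -- then a j ≠ some u0
          have haj := hjS (Finset.mem_univ _) htj
          cases haj' : a j with
          | none =>
              have hb : b j = none := by rw [hbj j hj.1, haj']
              unfold cs
              rw [haj', hb]
              simp
          | some u =>
              have hu : u ≠ u0 := by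
                intro h; subst h; exact haj haj'
              have hb : b j = some u := by rw [hbj j hj.1, haj']
              unfold cs
              rw [haj', hb]
              simp only [Option.elim]
              rw [hcnt_ne j u hu]
              simp
        · -- j < t, counts all agree
          have hnle : ¬ t ≤ j := by
            intro h
            rcases lt_or_eq_of_le h with h' | h'
            · exact htj h'
            · exact hj.1 h'.symm
          have hb : b j = a j := hbj j hj.1
          unfold cs
          rw [hb]
          cases haj' : a j with
          | none => simp
          | some u => simp only [Option.elim]; rw [hcnt_lo j hnle u]; simp
      have hSval : ∀ j ∈ S, |cs i a j - cs i b j| =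
          |g i (cnt a j u0) - g i (cnt a j u0 - 1)| := by
        intro j hj
        rw [hSdef, Finset.mem_filter] at hj
        obtain ⟨-, htj, haj⟩ := hj
        have hb : b j = some u0 := by rw [hbj j (ne_of_gt htj), haj]
        have hc : cnt a j u0 = cnt b j u0 + 1 := hcnt_hi j htj.le
        have hcb : cnt b j u0 = cnt a j u0 - 1 := by omega
        unfold cs
        rw [haj, hb]
        simp only [Option.elim]
        rw [hcb]
      -- split the sum
      have hsplit : ∑ j : Fin T, |cs i a j - cs i b j| =
          |cs i a t - cs i b t| + ∑ j ∈ Finset.univ.erase t, |cs i a j - cs i b j| :=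
        (Finset.add_sum_erase _ _ (Finset.mem_univ t)).symm
      have herase : ∑ j ∈ Finset.univ.erase t, |cs i a j - cs i b j| =
          ∑ j ∈ S, |cs i a j - cs i b j| :=
        (Finset.sum_subset hSsub hzero).symm
      have hSsum : ∑ j ∈ S, |cs i a j - cs i b j| =
          ∑ j ∈ S, |g i (cnt a j u0) - g i (cnt a j u0 - 1)| :=
        Finset.sum_congr rfl hSval
      -- injectivity of cnt on S
      have hinj : Set.InjOn (fun j => cnt a j u0) S := by
        intro j1 hj1 j2 hj2 heq
        rw [hSdef, Finset.coe_filter] at hj1 hj2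
        simp only [Set.mem_setOf_eq] at hj1 hj2
        by_contra hne
        rcases lt_or_gt_of_ne hne with h | h
        · exact absurd heq (ne_of_lt (cnt_lt a h hj2.2.2))
        · exact absurd heq.symm (ne_of_lt (cnt_lt a h hj1.2.2))
      have himage : ∑ j ∈ S, |g i (cnt a j u0) - g i (cnt a j u0 - 1)| =
          ∑ n ∈ S.image (fun j => cnt a j u0), |g i n - g i (n - 1)| :=
        by rw [Finset.sum_image (fun j1 hj1 j2 hj2 h => hinj hj1 hj2 h)]
      have hgt : ∀ n ∈ S.image (fun j => cnt a j u0), k < n := by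
        intro n hn
        rw [Finset.mem_image] at hn
        obtain ⟨j, hj, hjn⟩ := hn
        rw [hSdef, Finset.mem_filter] at hj
        rw [← hjn, hkdef]
        exact cnt_lt a hj.2.1 hj.2.2
      have := bound_aux i hi k (S.image (fun j => cnt a j u0)) hgt
      rw [hsplit, herase, hSsum, himage, hdt]
      exact this

end Stmt12Aux

/-- sensitivity of the level-`i` count stream. If two streams
`a, a' : Fin T → Option U` agree at every position except possibly `t`, then
the corresponding level-`i` count streams `c, c'` satisfy
`∑_j |c j − c' j| ≤ 8`. -/
theorem stmt_12 {U : Type*} [DecidableEq U] (i : ℕ) (hi : 1 ≤ i)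
    (T : ℕ) (a a' : Fin T → Option U)
    (t : Fin T) (hneigh : ∀ j : Fin T, j ≠ t → a j = a' j)
    (c c' : Fin T → ℤ)
    (hc : ∀ s : Fin T,
      c s = (a s).elim 0 (fun u =>
        if (Finset.univ.filter (fun j : Fin T => j ≤ s ∧ a j = some u)).card = i then 1
        else if (Finset.univ.filter (fun j : Fin T => j ≤ s ∧ a j = some u)).card = i + 1
          then -1 else 0))
    (hc' : ∀ s : Fin T,
      c' s = (a' s).elim 0 (fun u =>
        if (Finset.univ.filter (fun j : Fin T => j ≤ s ∧ a' j = some u)).card = i then 1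
        else if (Finset.univ.filter (fun j : Fin T => j ≤ s ∧ a' j = some u)).card = i + 1
          then -1 else 0)) :
    ∑ j : Fin T, |c j - c' j| ≤ 8 := by
  have hca : ∀ s : Fin T, c s = Stmt12Aux.cs i a s := by
    intro s; rw [hc s]; rfl
  have hca' : ∀ s : Fin T, c' s = Stmt12Aux.cs i a' s := by
    intro s; rw [hc' s]; rfl
  have hupd : Function.update a t none = Function.update a' t none := by
    funext j
    by_cases h : j = t
    · subst h; simp
    · rw [Function.update_of_ne h, Function.update_of_ne h, hneigh j h]
  have h1 := Stmt12Aux.key i hi a t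
  have h2 := Stmt12Aux.key i hi a' t
  calc ∑ j : Fin T, |c j - c' j|
      ≤ ∑ j : Fin T, (|Stmt12Aux.cs i a j - Stmt12Aux.cs i (Function.update a t none) j| +
          |Stmt12Aux.cs i a' j - Stmt12Aux.cs i (Function.update a' t none) j|) := by
        apply Finset.sum_le_sum
        intro j _
        rw [hca j, hca' j]
        calc |Stmt12Aux.cs i a j - Stmt12Aux.cs i a' j|
            ≤ |Stmt12Aux.cs i a j - Stmt12Aux.cs i (Function.update a t none) j| +
              |Stmt12Aux.cs i (Function.update a t none) j - Stmt12Aux.cs i a' j| :=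
              abs_sub_le _ _ _
          _ = |Stmt12Aux.cs i a j - Stmt12Aux.cs i (Function.update a t none) j| +
              |Stmt12Aux.cs i a' j - Stmt12Aux.cs i (Function.update a' t none) j| := by
              rw [hupd, abs_sub_comm (Stmt12Aux.cs i (Function.update a' t none) j) (Stmt12Aux.cs i a' j)]
    _ = (∑ j : Fin T, |Stmt12Aux.cs i a j - Stmt12Aux.cs i (Function.update a t none) j|) +
        ∑ j : Fin T, |Stmt12Aux.cs i a' j - Stmt12Aux.cs i (Function.update a' t none) j| :=
        Finset.sum_add_distrib
    _ ≤ 4 + 4 := add_le_add h1 h2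
    _ = 8 := by norm_num
end

section
/- Let U be a type with decidable equality, let k ≥ 1 be a natural number, and let h : U → {1,…,k} and g : U → {−1, 1} be arbitrary functions. Let S = (a_1,…,a_T) and S' = (a'_1,…,a'_T) be two streams of length T over U (entries in Option U) that agree at every position except possibly one position t ∈ [T]. For i ∈ {1,…,k} and j ∈ [T] define s_{i,j} = g(u) if a_j = u ≠ ⊥ and h(u) = i, and s_{i,j} = 0 otherwise; define s'_{i,j} analogously from S'. Then ∑_{i=1}^{k} ∑_{j=1}^{T} |s_{i,j} − s'_{i,j}| ≤ 2. -/
/-- sensitivity of the signed CountSketch bucket streams. With a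
hash `h : U → Fin k` and signs `g : U → {−1,1}`, if two streams agree at every
position except possibly `t`, then the bucket streams `s, s'` satisfy
`∑_{i,j} |s i j − s' i j| ≤ 2`. -/
theorem stmt_13 {U : Type*} [DecidableEq U] (k T : ℕ) (hk : 1 ≤ k)
    (h : U → Fin k) (g : U → ℤ) (hg : ∀ u, g u = 1 ∨ g u = -1)
    (a a' : Fin T → Option U)
    (t : Fin T) (hneigh : ∀ j : Fin T, j ≠ t → a j = a' j)
    (s s' : Fin k → Fin T → ℤ)
    (hs : ∀ (i : Fin k) (j : Fin T),
      s i j = (a j).elim 0 (fun u => if h u = i then g u else 0))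
    (hs' : ∀ (i : Fin k) (j : Fin T),
      s' i j = (a' j).elim 0 (fun u => if h u = i then g u else 0)) :
    ∑ i : Fin k, ∑ j : Fin T, |s i j - s' i j| ≤ 2 := by
  have key : ∀ (b : Fin T → Option U),
      ∑ i : Fin k, |(b t).elim 0 (fun u => if h u = i then g u else (0:ℤ))| ≤ 1 := by
    intro b
    cases hb : b t with
    | none => simp
    | some u =>
      have : ∀ i : Fin k, |(if h u = i then g u else (0:ℤ))|
          = if h u = i then 1 else 0 := by
        intro i
        rcases hg u with hu | hu <;> split <;> simp [hu]
      simp only [hb, Option.elim, this]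
      simp [Finset.sum_ite_eq]
  have hsum : ∀ i : Fin k, ∑ j : Fin T, |s i j - s' i j| = |s i t - s' i t| := by
    intro i
    rw [Finset.sum_eq_single t]
    · intro j _ hj
      rw [hs, hs', hneigh j hj, sub_self, abs_zero]
    · intro ht; exact absurd (Finset.mem_univ t) ht
  calc ∑ i : Fin k, ∑ j : Fin T, |s i j - s' i j|
      = ∑ i : Fin k, |s i t - s' i t| := by simp [hsum]
    _ ≤ ∑ i : Fin k, (|s i t| + |s' i t|) :=
        Finset.sum_le_sum fun i _ => abs_sub (s i t) (s' i t)
    _ = (∑ i : Fin k, |s i t|) + ∑ i : Fin k, |s' i t| := Finset.sum_add_distrib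
    _ ≤ 1 + 1 := by
        gcongr
        · simpa only [← hs] using key a
        · simpa only [← hs'] using key a'
    _ = 2 := by norm_num
end

section
/- Let η ∈ (0, 1/2) and γ ≥ 0 be reals, let k ≥ 1 be a natural number, and let F_2 ≥ 0 be a real. Let z_1,…,z_k and ẑ_1,…,ẑ_k be reals with |z_i − ẑ_i| ≤ γ for every i ∈ [k], and suppose |∑_{i=1}^{k} ẑ_i^2 − F_2| ≤ (η/4)·F_2. Then |∑_{i=1}^{k} z_i^2 − F_2| ≤ η·F_2 + 4kγ^2/η. -/
/-- perturbation bound for ℓ₂ moment estimation from noisy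
CountSketch bucket counts: if each `|z i − zhat i| ≤ γ` and
`|∑ zhat i ^ 2 − F₂| ≤ (η/4)·F₂`, then
`|∑ z i ^ 2 − F₂| ≤ η·F₂ + 4kγ²/η`. -/
theorem stmt_14 (η γ : ℝ) (hη : η ∈ Set.Ioo (0 : ℝ) (1 / 2)) (hγ : 0 ≤ γ)
    (k : ℕ) (hk : 1 ≤ k) (F2 : ℝ) (hF2 : 0 ≤ F2)
    (z zhat : Fin k → ℝ) (hzz : ∀ i, |z i - zhat i| ≤ γ)
    (hzhat : |∑ i, zhat i ^ 2 - F2| ≤ (η / 4) * F2) :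
    |∑ i, z i ^ 2 - F2| ≤ η * F2 + 4 * (k : ℝ) * γ ^ 2 / η := by
  obtain ⟨hη0, hη2⟩ := hη
  set S := ∑ i, zhat i ^ 2 with hS
  have hSnn : 0 ≤ S := Finset.sum_nonneg fun i _ => sq_nonneg _
  have hterm : ∀ i, |z i ^ 2 - zhat i ^ 2| ≤ η / 2 * zhat i ^ 2 + γ ^ 2 + 2 * γ ^ 2 / η := by
    intro i
    have hd := hzz i
    have hd2 : (z i - zhat i) ^ 2 ≤ γ ^ 2 := by
      have := sq_abs (z i - zhat i)
      nlinarith [abs_nonneg (z i - zhat i)]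
    have hc : 2 * γ ^ 2 / η * η = 2 * γ ^ 2 := div_mul_cancel₀ _ hη0.ne'
    rw [abs_le]
    constructor
    · nlinarith [sq_nonneg (η * zhat i + 2 * (z i - zhat i)),
        mul_le_mul_of_nonneg_left hd2 hη0.le]
    · nlinarith [sq_nonneg (η * zhat i - 2 * (z i - zhat i)),
        mul_le_mul_of_nonneg_left hd2 hη0.le]
  have hsum : |∑ i, z i ^ 2 - S| ≤ η / 2 * S + (k : ℝ) * (γ ^ 2 + 2 * γ ^ 2 / η) := by
    have h1 : ∑ i, z i ^ 2 - S = ∑ i, (z i ^ 2 - zhat i ^ 2) := by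
      rw [Finset.sum_sub_distrib]
    rw [h1]
    calc |∑ i, (z i ^ 2 - zhat i ^ 2)| ≤ ∑ i, |z i ^ 2 - zhat i ^ 2| :=
          Finset.abs_sum_le_sum_abs _ _
      _ ≤ ∑ i, (η / 2 * zhat i ^ 2 + (γ ^ 2 + 2 * γ ^ 2 / η)) := by
          apply Finset.sum_le_sum
          intro i _
          have := hterm i
          linarith
      _ = η / 2 * S + (k : ℝ) * (γ ^ 2 + 2 * γ ^ 2 / η) := by
          rw [Finset.sum_add_distrib, ← Finset.mul_sum, Finset.sum_const,
            Finset.card_univ, Fintype.card_fin]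
          ring
  have hS2 : -(η / 4 * F2) ≤ S - F2 ∧ S - F2 ≤ η / 4 * F2 := abs_le.mp hzhat
  have htri : |∑ i, z i ^ 2 - F2| ≤ |∑ i, z i ^ 2 - S| + |S - F2| := by
    calc |∑ i, z i ^ 2 - F2| = |(∑ i, z i ^ 2 - S) + (S - F2)| := by ring_nf
      _ ≤ _ := abs_add_le _ _
  have hk1 : (1 : ℝ) ≤ (k : ℝ) := by exact_mod_cast hk
  have hγ2 : (k : ℝ) * γ ^ 2 ≤ 2 * (k : ℝ) * γ ^ 2 / η := by
    rw [le_div_iff₀ hη0]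
    nlinarith [mul_nonneg (le_trans zero_le_one hk1) (sq_nonneg γ)]
  have h4 : 2 * (k : ℝ) * γ ^ 2 / η + 2 * (k : ℝ) * γ ^ 2 / η = 4 * (k : ℝ) * γ ^ 2 / η := by
    ring
  have hkd : (k : ℝ) * (2 * γ ^ 2 / η) = 2 * (k : ℝ) * γ ^ 2 / η := by ring
  have hSle : S ≤ F2 + η / 4 * F2 := by linarith [hS2.2]
  have hfin : η / 2 * S ≤ 3 / 4 * η * F2 := by
    nlinarith [mul_nonneg hη0.le hSnn]
  have hmul : (k : ℝ) * (γ ^ 2 + 2 * γ ^ 2 / η) = (k : ℝ) * γ ^ 2 + 2 * (k : ℝ) * γ ^ 2 / η := by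
    ring
  linarith [hS2.1, hS2.2, hzhat, hsum, htri,
    mul_nonneg hη0.le hF2]
end

section
/- Let η ∈ (0, 1/2) be a real, let k ≥ 1 be a natural number, let φ ≥ 1 be a real, and let γ_1, γ_2 ≥ 0 be reals. Let f ≥ 0 and L ≥ 0 be reals, and suppose f̂ is a real with |f̂ − f| ≤ (η/16)/(10·√(φ·k))·L + γ_2, and F̂ is a real with L^2/1.1 − γ_1 ≤ F̂ ≤ 1.1·L^2 + γ_1. If f̂^2 ≥ (F̂ + γ_1)/(25·φ·k) + 512·γ_2^2/η^2, then (1 − η)·f^2 ≤ f̂^2 ≤ (1 + η)·f^2. -/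
set_option maxHeartbeats 1600000 in
/-- every reported heavy hitter has a multiplicatively accurate
estimated frequency. Here `f` is the true frequency, `L` the ℓ₂ norm of its
bucket, `fhat` the estimated frequency (accurate up to
`(η/16)/(10√(φk))·L + γ₂`), and `Fhat` a `(1.1, γ₁)`-approximation of `L²`.
If `fhat² ≥ (Fhat + γ₁)/(25φk) + 512γ₂²/η²`, then
`(1−η)·f² ≤ fhat² ≤ (1+η)·f²`. -/
theorem stmt_15 (η : ℝ) (hη : η ∈ Set.Ioo (0 : ℝ) (1 / 2))
    (k : ℕ) (hk : 1 ≤ k) (φ : ℝ) (hφ : 1 ≤ φ)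
    (γ1 γ2 : ℝ) (hγ1 : 0 ≤ γ1) (hγ2 : 0 ≤ γ2)
    (f L : ℝ) (hf : 0 ≤ f) (hL : 0 ≤ L)
    (fhat Fhat : ℝ)
    (hfhat : |fhat - f| ≤ (η / 16) / (10 * Real.sqrt (φ * k)) * L + γ2)
    (hFhat_lo : L ^ 2 / 1.1 - γ1 ≤ Fhat) (hFhat_hi : Fhat ≤ 1.1 * L ^ 2 + γ1)
    (hbig : (Fhat + γ1) / (25 * φ * k) + 512 * γ2 ^ 2 / η ^ 2 ≤ fhat ^ 2) :
    (1 - η) * f ^ 2 ≤ fhat ^ 2 ∧ fhat ^ 2 ≤ (1 + η) * f ^ 2 := by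
  obtain ⟨hη0, hη2⟩ := hη
  have hk1 : (1:ℝ) ≤ (k:ℝ) := by exact_mod_cast hk
  have hφk : (1:ℝ) ≤ φ * k := by nlinarith
  obtain ⟨s, hs_def⟩ : ∃ s, Real.sqrt (φ * k) = s := ⟨_, rfl⟩
  rw [hs_def] at hfhat
  have hs2 : s ^ 2 = φ * k := by rw [← hs_def]; exact Real.sq_sqrt (by linarith)
  have hsnn : 0 ≤ s := hs_def ▸ Real.sqrt_nonneg _
  have hs1 : 1 ≤ s := by nlinarith
  have hs0 : 0 < s := by linarith
  obtain ⟨a, ha_def⟩ : ∃ a, |fhat| = a := ⟨_, rfl⟩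
  have ha2 : a ^ 2 = fhat ^ 2 := by rw [← ha_def]; exact sq_abs fhat
  have hann : 0 ≤ a := ha_def ▸ abs_nonneg _
  have h25 : (0:ℝ) < 25 * φ * k := by nlinarith
  -- key inequality
  have hFL : 10 * L ^ 2 ≤ 11 * (Fhat + γ1) := by
    rw [show (1.1:ℝ) = 11/10 by norm_num] at hFhat_lo
    linarith
  have hγη : 0 ≤ 512 * γ2 ^ 2 / η ^ 2 := by positivity
  have hFd : 0 ≤ (Fhat + γ1) / (25 * φ * k) := by
    apply div_nonneg _ h25.le
    nlinarith [sq_nonneg L, hFL]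
  have hPa : (Fhat + γ1) / (25 * φ * k) ≤ a ^ 2 := by rw [ha2]; linarith
  have hFa : Fhat + γ1 ≤ a ^ 2 * (25 * φ * k) := (div_le_iff₀ h25).mp hPa
  -- claim 1 : L ≤ 6 s a
  have hL2 : L ^ 2 ≤ 28 * s ^ 2 * a ^ 2 := by
    rw [hs2]; nlinarith [hFL, hFa]
  have hclaim1 : L ≤ 6 * s * a := by
    refine le_of_pow_le_pow_left₀ two_ne_zero (by positivity) ?_
    nlinarith [sq_nonneg (s * a)]
  -- claim 2 : γ2 ≤ η a / 20
  have hγ2' : 512 * γ2 ^ 2 ≤ η ^ 2 * a ^ 2 := by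
    have h1 : 512 * γ2 ^ 2 / η ^ 2 ≤ a ^ 2 := by rw [ha2]; linarith
    have h := (div_le_iff₀ (by positivity : (0:ℝ) < η ^ 2)).mp h1
    linarith
  have hclaim2 : γ2 ≤ η * a / 20 := by
    have h20 : 20 * γ2 ≤ η * a := by
      refine le_of_pow_le_pow_left₀ two_ne_zero (by positivity) ?_
      nlinarith [sq_nonneg γ2]
    linarith
  -- error bound
  have hEbound : (η / 16) / (10 * s) * L ≤ 3 * η * a / 80 := by
    have h1 : (η / 16) / (10 * s) * L ≤ (η / 16) / (10 * s) * (6 * s * a) :=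
      mul_le_mul_of_nonneg_left hclaim1 (by positivity)
    have h2 : (η / 16) / (10 * s) * (6 * s * a) = 3 * η * a / 80 := by
      field_simp; ring
    linarith [h1, h2.le, h2.ge]
  have hE : |fhat - f| ≤ η * a / 10 := by
    calc |fhat - f| ≤ (η / 16) / (10 * s) * L + γ2 := hfhat
    _ ≤ 3 * η * a / 80 + η * a / 20 := by linarith
    _ ≤ η * a / 10 := by nlinarith
  have haf : |a - f| ≤ η * a / 10 := by
    have h := abs_abs_sub_abs_le_abs_sub fhat f
    rw [abs_of_nonneg hf, ha_def] at h
    exact le_trans h hE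
  rw [abs_le] at haf
  obtain ⟨haf1, haf2⟩ := haf
  have hηa : η * a ≤ a / 2 := by nlinarith [mul_le_mul_of_nonneg_right hη2.le hann]
  have hX : 0 ≤ a - η * a / 10 := by linarith
  have hfup : f ^ 2 ≤ (a + η * a / 10) ^ 2 :=
    pow_le_pow_left₀ hf (by linarith) 2
  have hfdn : (a - η * a / 10) ^ 2 ≤ f ^ 2 :=
    pow_le_pow_left₀ hX (by linarith) 2
  have hη2a : η ^ 2 * a ^ 2 ≤ η * a ^ 2 / 2 := by
    nlinarith [mul_le_mul_of_nonneg_right (show η ^ 2 ≤ η / 2 by nlinarith) (sq_nonneg a)]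
  have hη3a : 0 ≤ η ^ 3 * a ^ 2 := by positivity
  have hηaa : 0 ≤ η * a ^ 2 := by positivity
  constructor
  · rw [← ha2]
    nlinarith [mul_le_mul_of_nonneg_left hfup (by linarith : (0:ℝ) ≤ 1 - η)]
  · rw [← ha2]
    nlinarith [mul_le_mul_of_nonneg_left hfdn (by linarith : (0:ℝ) ≤ 1 + η)]
end

section
/- Let η ∈ (0, 1/2), p > 0, α ≥ 1, γ' ≥ 0 be reals. Let F_low ≥ 0, F_high ≥ 0, F_contrib ≥ 0 be reals with F_contrib ≤ F_high, set F = F_low + F_high, and assume F_low + F_contrib ≥ (1−η)·F. Suppose Ẑ is a real with (1−η)^{p+1}·F_contrib ≤ Ẑ ≤ (1+η)·F_high, and Ŝ is a real with F_low/α − γ' ≤ Ŝ ≤ α·F_low + γ'. Then min((1−η)/α, (1+2η)^{−(p+2)})·F − γ' ≤ Ŝ + Ẑ ≤ max(α, 1+η)·F + γ'. In particular, Ŝ + Ẑ is a (max(α/(1−η), (1+2η)^{p+2}), γ')-approximation to F. -/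
/-- combining the low-frequency estimate `Shat` and the
high-frequency estimate `Zhat` into an approximation of the full ℓ_p moment
`F = F_low + F_high`. -/
theorem stmt_18 (η p α γ' : ℝ) (hη : η ∈ Set.Ioo (0 : ℝ) (1 / 2)) (hp : 0 < p)
    (hα : 1 ≤ α) (hγ' : 0 ≤ γ')
    (Flow Fhigh Fcontrib : ℝ) (hFlow : 0 ≤ Flow) (hFhigh : 0 ≤ Fhigh)
    (hFcontrib : 0 ≤ Fcontrib) (hcon : Fcontrib ≤ Fhigh)
    (F : ℝ) (hF : F = Flow + Fhigh)
    (hmost : (1 - η) * F ≤ Flow + Fcontrib)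
    (Zhat Shat : ℝ)
    (hZlo : (1 - η) ^ (p + 1) * Fcontrib ≤ Zhat) (hZhi : Zhat ≤ (1 + η) * Fhigh)
    (hSlo : Flow / α - γ' ≤ Shat) (hShi : Shat ≤ α * Flow + γ') :
    (min ((1 - η) / α) ((1 + 2 * η) ^ (-(p + 2))) * F - γ' ≤ Shat + Zhat ∧
      Shat + Zhat ≤ max α (1 + η) * F + γ') ∧
    (F / max (α / (1 - η)) ((1 + 2 * η) ^ (p + 2)) - γ' ≤ Shat + Zhat ∧
      Shat + Zhat ≤ max (α / (1 - η)) ((1 + 2 * η) ^ (p + 2)) * F + γ') := by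
  obtain ⟨hη0, hη2⟩ := hη
  have h1η : (0:ℝ) < 1 - η := by linarith
  have hα0 : (0:ℝ) < α := by linarith
  have h12 : (1:ℝ) ≤ 1 + 2 * η := by linarith
  have h120 : (0:ℝ) < 1 + 2 * η := by linarith
  have hprod : (1:ℝ) ≤ (1 - η) * (1 + 2 * η) := by nlinarith
  have hBpos : (0:ℝ) < (1 + 2 * η) ^ (p + 2) := Real.rpow_pos_of_pos h120 _
  have hApos : (0:ℝ) < (1 - η) ^ (p + 2) := Real.rpow_pos_of_pos h1η _
  have hAB : (1:ℝ) ≤ (1 - η) ^ (p + 2) * (1 + 2 * η) ^ (p + 2) := by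
    rw [← Real.mul_rpow h1η.le h120.le]
    calc (1:ℝ) = 1 ^ (p + 2) := (Real.one_rpow _).symm
    _ ≤ ((1 - η) * (1 + 2 * η)) ^ (p + 2) :=
      Real.rpow_le_rpow (by norm_num) hprod (by linarith)
  have hneg : (1 + 2 * η) ^ (-(p + 2)) = ((1 + 2 * η) ^ (p + 2))⁻¹ :=
    Real.rpow_neg h120.le _
  have hkey : (1 + 2 * η) ^ (-(p + 2)) ≤ (1 - η) ^ (p + 2) := by
    rw [hneg, inv_le_iff_one_le_mul₀' hBpos]
    linarith [hAB]
  have hsplit : (1 - η) ^ (p + 2) = (1 - η) * (1 - η) ^ (p + 1) := by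
    rw [show p + 2 = 1 + (p + 1) by ring, Real.rpow_add h1η, Real.rpow_one]
  set m := min ((1 - η) / α) ((1 + 2 * η) ^ (-(p + 2))) with hm
  have hm0 : 0 < m := lt_min (by positivity) (Real.rpow_pos_of_pos h120 _)
  have hm1 : m ≤ (1 - η) / α := min_le_left _ _
  have hm2 : m ≤ (1 - η) * (1 - η) ^ (p + 1) := by
    rw [← hsplit]; exact le_trans (min_le_right _ _) hkey
  -- lower bound: m * F ≤ Flow / α + (1-η)^(p+1) * Fcontrib
  have hlow : m * F ≤ Flow / α + (1 - η) ^ (p + 1) * Fcontrib := by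
    have h1 : m * ((1 - η) * F) ≤ m * (Flow + Fcontrib) :=
      mul_le_mul_of_nonneg_left hmost hm0.le
    have h2 : m * Flow ≤ (1 - η) * (Flow / α) := by
      have := mul_le_mul_of_nonneg_right hm1 hFlow
      calc m * Flow ≤ (1 - η) / α * Flow := this
      _ = (1 - η) * (Flow / α) := by ring
    have h3 : m * Fcontrib ≤ (1 - η) * ((1 - η) ^ (p + 1) * Fcontrib) := by
      have := mul_le_mul_of_nonneg_right hm2 hFcontrib
      linarith [this]
    have h4 : (1 - η) * (m * F) ≤ (1 - η) * (Flow / α + (1 - η) ^ (p + 1) * Fcontrib) := by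
      nlinarith
    exact le_of_mul_le_mul_left h4 h1η
  have hlb : m * F - γ' ≤ Shat + Zhat := by linarith
  -- upper bound with M1 = max α (1+η)
  have hM1a : α ≤ max α (1 + η) := le_max_left _ _
  have hM1b : 1 + η ≤ max α (1 + η) := le_max_right _ _
  have hub : Shat + Zhat ≤ max α (1 + η) * F + γ' := by
    have h1 : α * Flow ≤ max α (1 + η) * Flow := mul_le_mul_of_nonneg_right hM1a hFlow
    have h2 : (1 + η) * Fhigh ≤ max α (1 + η) * Fhigh := mul_le_mul_of_nonneg_right hM1b hFhigh
    rw [hF]; nlinarith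
  refine ⟨⟨hlb, hub⟩, ?_, ?_⟩
  · -- F / M - γ' ≤ Shat + Zhat, where M⁻¹ = m
    have hgen : ∀ a b : ℝ, 0 < a → 0 < b → (max a b)⁻¹ = min a⁻¹ b⁻¹ := by
      intro a b ha hb
      rcases le_total a b with h | h
      · rw [max_eq_right h, min_eq_right (by gcongr)]
      · rw [max_eq_left h, min_eq_left (by gcongr)]
    have hinv : (max (α / (1 - η)) ((1 + 2 * η) ^ (p + 2)))⁻¹ = m := by
      rw [hgen _ _ (by positivity) hBpos, hm, hneg, inv_div]
    have : F / max (α / (1 - η)) ((1 + 2 * η) ^ (p + 2)) = m * F := by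
      rw [div_eq_mul_inv, hinv, mul_comm]
    linarith [hlb, this.le, this.ge]
  · -- upper bound with M
    have hF0 : 0 ≤ F := by rw [hF]; linarith
    have hM : max α (1 + η) ≤ max (α / (1 - η)) ((1 + 2 * η) ^ (p + 2)) := by
      apply max_le
      · calc α = α / 1 := (div_one α).symm
        _ ≤ α / (1 - η) := by
            apply div_le_div_of_nonneg_left (by linarith) h1η (by linarith)
        _ ≤ _ := le_max_left _ _
      · calc (1 + η : ℝ) ≤ 1 + 2 * η := by linarith
        _ = (1 + 2 * η) ^ (1:ℝ) := (Real.rpow_one _).symm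
        _ ≤ (1 + 2 * η) ^ (p + 2) := Real.rpow_le_rpow_of_exponent_le h12 (by linarith)
        _ ≤ _ := le_max_right _ _
    have := mul_le_mul_of_nonneg_right hM hF0
    linarith [hub]
end

section
/- Let η ∈ (0,1) and D ≥ 0 be reals, let T ≥ 1 and m ≥ 1 be naturals, let c_1, …, c_T be nonnegative reals, and let 0 = t_0 < t_1 < ⋯ < t_{m−1} < t_m = T be indices partitioning [1,T] into consecutive groups G_i = {t_{i−1}+1, …, t_i} for i ∈ [m]. Assume: (a) for each i ∈ [m−1], ∑_{j ∈ G_i, j < t_i} c_j ≤ D; (b) ∑_{j ∈ G_m} c_j ≤ D; (c) for each i ∈ [m−1] there is a real c̃_i with (1−η)·∑_{j ∈ G_i} c_j ≤ c̃_i ≤ (1+η)·∑_{j ∈ G_i} c_j. Define ĉ_t = c̃_i if t = t_i for some i ∈ [m−1], and ĉ_t = 0 otherwise. Then for all indices 1 ≤ l ≤ r ≤ T: (1−η)·∑_{j=l}^{r} c_j − 2D ≤ ∑_{j=l}^{r} ĉ_j ≤ (1+η)·∑_{j=l}^{r} c_j + 2D. -/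
/-- deterministic aggregation guarantee of the grouping-based
summing algorithm. The positions `1,…,T` are split into consecutive groups
`G_i = {t_{i−1}+1,…,t_i}` (with `t 0 = 0 < t 1 < ⋯ < t m = T`); each completed
group `i < m` releases a `(1±η)`-accurate noisy total `ctil i` at its last
position `t i`, the pre-last-position part of each completed group and the
whole last group have total at most `D`. Then every interval sum of the
released stream `chat` approximates the corresponding interval sum of `c`
up to a `(1±η)` relative error and `2D` additive error. -/
theorem stmt_19 (η D : ℝ) (hη : η ∈ Set.Ioo (0 : ℝ) 1) (hD : 0 ≤ D)
    (T m : ℕ) (hT : 1 ≤ T) (hm : 1 ≤ m)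
    (c : ℕ → ℝ) (hc : ∀ j ∈ Finset.Icc 1 T, 0 ≤ c j)
    (t : ℕ → ℕ) (ht0 : t 0 = 0) (htm : t m = T)
    (htmono : ∀ i < m, t i < t (i + 1))
    (ha : ∀ i ∈ Finset.Icc 1 (m - 1),
      ∑ j ∈ Finset.Ico (t (i - 1) + 1) (t i), c j ≤ D)
    (hb : ∑ j ∈ Finset.Icc (t (m - 1) + 1) (t m), c j ≤ D)
    (ctil : ℕ → ℝ)
    (hctil : ∀ i ∈ Finset.Icc 1 (m - 1),
      (1 - η) * ∑ j ∈ Finset.Icc (t (i - 1) + 1) (t i), c j ≤ ctil i ∧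
      ctil i ≤ (1 + η) * ∑ j ∈ Finset.Icc (t (i - 1) + 1) (t i), c j)
    (chat : ℕ → ℝ)
    (hchat1 : ∀ i ∈ Finset.Icc 1 (m - 1), chat (t i) = ctil i)
    (hchat2 : ∀ j ∈ Finset.Icc 1 T,
      (∀ i ∈ Finset.Icc 1 (m - 1), t i ≠ j) → chat j = 0) :
    ∀ l r : ℕ, 1 ≤ l → l ≤ r → r ≤ T →
      (1 - η) * ∑ j ∈ Finset.Icc l r, c j - 2 * D ≤ ∑ j ∈ Finset.Icc l r, chat j ∧
      ∑ j ∈ Finset.Icc l r, chat j ≤ (1 + η) * ∑ j ∈ Finset.Icc l r, c j + 2 * D := by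
  obtain ⟨hη0, hη1⟩ := hη
  intro l r hl hlr hrT
  -- monotonicity of t up to m
  have tstrict : ∀ i j, i < j → j ≤ m → t i < t j := by
    intro i j hij hjm
    induction j with
    | zero => omega
    | succ k ih =>
      rcases Nat.lt_succ_iff_lt_or_eq.mp hij with h | h
      · exact lt_trans (ih h (by omega)) (htmono k (by omega))
      · subst h; exact htmono i (by omega)
  have tmono : ∀ i j, i ≤ j → j ≤ m → t i ≤ t j := by
    intro i j hij hjm
    rcases eq_or_lt_of_le hij with h | h
    · subst h; exact le_refl _
    · exact le_of_lt (tstrict i j h hjm)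
  -- sums of c over subsets of [1,T]
  have hsum_nonneg : ∀ (s : Finset ℕ), (∀ j ∈ s, j ∈ Finset.Icc 1 T) →
      0 ≤ ∑ j ∈ s, c j := fun s hs => Finset.sum_nonneg (fun j hj => hc j (hs j hj))
  have hsub : ∀ s u : Finset ℕ, s ⊆ u → (∀ j ∈ u, j ∈ Finset.Icc 1 T) →
      ∑ j ∈ s, c j ≤ ∑ j ∈ u, c j := fun s u hsu hu =>
    Finset.sum_le_sum_of_subset_of_nonneg hsu (fun j hj _ => hc j (hu j hj))
  -- p : least index with l ≤ t p
  have hex : ∃ i, l ≤ t i := ⟨m, by rw [htm]; omega⟩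
  set p := Nat.find hex with hpdef
  have hpl : l ≤ t p := Nat.find_spec hex
  have hpm : p ≤ m := Nat.find_le (by rw [htm]; omega)
  have hp1 : 1 ≤ p := by
    by_contra h
    have hp0 : p = 0 := by omega
    rw [hp0, ht0] at hpl; omega
  have hppred : t (p - 1) < l := by
    have := Nat.find_min hex (show p - 1 < p by omega)
    omega
  -- q : greatest index ≤ m with t q ≤ r
  set q := Nat.findGreatest (fun i => t i ≤ r) m with hqdef
  have hqr : t q ≤ r :=
    Nat.findGreatest_spec (P := fun i => t i ≤ r) (Nat.zero_le m) (by simp [ht0])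
  have hqm : q ≤ m := Nat.findGreatest_le m
  have hqgt : ∀ k, q < k → k ≤ m → r < t k := by
    intro k hk hkm
    have := Nat.findGreatest_is_greatest (P := fun i => t i ≤ r) hk hkm
    omega
  set q' := min q (m - 1) with hq'def
  have hq'm1 : q' ≤ m - 1 := min_le_right _ _
  have hq'q : q' ≤ q := min_le_left _ _
  have hq'm : q' ≤ m := by omega
  -- the chat sum equals the ctil sum over Icc p q'
  have hS : ∑ j ∈ Finset.Icc l r, chat j = ∑ i ∈ Finset.Icc p q', ctil i := by
    have hinj : ∀ x ∈ Finset.Icc p q', ∀ y ∈ Finset.Icc p q', t x = t y → x = y := by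
      intro x hx y hy hxy
      simp only [Finset.mem_Icc] at hx hy
      by_contra hne
      rcases Nat.lt_or_ge x y with h | h
      · have := tstrict x y h (by omega); omega
      · have hyx : y < x := by omega
        have := tstrict y x hyx (by omega); omega
    have hsubset : (Finset.Icc p q').image t ⊆ Finset.Icc l r := by
      intro j hj
      simp only [Finset.mem_image, Finset.mem_Icc] at hj ⊢
      obtain ⟨i, ⟨hpi, hiq⟩, rfl⟩ := hj
      constructor
      · exact le_trans hpl (tmono p i hpi (by omega))
      · exact le_trans (tmono i q (by omega) hqm) hqr
    have hzero : ∀ j ∈ Finset.Icc l r, j ∉ (Finset.Icc p q').image t → chat j = 0 := by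
      intro j hj hnim
      simp only [Finset.mem_Icc] at hj
      apply hchat2 j (by simp only [Finset.mem_Icc]; omega)
      intro i hi hij
      simp only [Finset.mem_Icc] at hi
      apply hnim
      simp only [Finset.mem_image, Finset.mem_Icc]
      refine ⟨i, ⟨?_, ?_⟩, hij⟩
      · exact Nat.find_le (by rw [hij]; omega)
      · have hiq : i ≤ q := by
          by_contra h
          have := hqgt i (by omega) (by omega)
          omega
        omega
    calc ∑ j ∈ Finset.Icc l r, chat j
        = ∑ j ∈ (Finset.Icc p q').image t, chat j := (Finset.sum_subset hsubset hzero).symm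
      _ = ∑ i ∈ Finset.Icc p q', chat (t i) := Finset.sum_image hinj
      _ = ∑ i ∈ Finset.Icc p q', ctil i := by
          apply Finset.sum_congr rfl
          intro i hi
          simp only [Finset.mem_Icc] at hi
          exact hchat1 i (by simp only [Finset.mem_Icc]; omega)
  have hA0 : 0 ≤ ∑ j ∈ Finset.Icc l r, c j := by
    apply hsum_nonneg; intro j hj; simp only [Finset.mem_Icc] at hj ⊢; omega
  by_cases hpq : p ≤ q'
  · -- main case: S nonempty
    -- telescoping of group sums
    have htel : ∀ b, p ≤ b → b ≤ m →
        ∑ i ∈ Finset.Icc p b, (∑ j ∈ Finset.Icc (t (i - 1) + 1) (t i), c j)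
          = ∑ j ∈ Finset.Icc (t (p - 1) + 1) (t b), c j := by
      intro b
      induction b with
      | zero => intro h1 _; exact absurd h1 (by omega)
      | succ k ih =>
        intro h1 h2
        rcases Nat.lt_or_ge k p with h | h
        · have hpk : p = k + 1 := by omega
          rw [hpk, Finset.Icc_self, Finset.sum_singleton]
        · rw [Finset.sum_Icc_succ_top (by omega : p ≤ k + 1), ih h (by omega)]
          simp only [Nat.add_sub_cancel, Finset.Icc_add_one_left_eq_Ioc]
          exact Finset.sum_Ioc_consecutive c
            (tmono (p - 1) k (by omega) (by omega))
            (le_of_lt (htmono k (by omega)))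
    have hGeq := htel q' hpq hq'm
    -- quantities
    have hlq' : l ≤ t q' := le_trans hpl (tmono p q' hpq hq'm)
    have hq'r : t q' ≤ r := le_trans (tmono q' q hq'q hqm) hqr
    have htpT : ∀ i ≤ m, t i ≤ T := fun i hi => htm ▸ tmono i m hi (le_refl m)
    -- split the group-union sum at l
    have hsplit1 : ∑ j ∈ Finset.Icc (t (p - 1) + 1) (t q'), c j
        = (∑ j ∈ Finset.Icc (t (p - 1) + 1) (l - 1), c j)
          + ∑ j ∈ Finset.Icc l (t q'), c j := by
      have h1 : Finset.Icc l (t q') = Finset.Ioc (l - 1) (t q') := by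
        rw [← Finset.Icc_add_one_left_eq_Ioc]; congr 1; omega
      rw [h1, Finset.Icc_add_one_left_eq_Ioc, Finset.Icc_add_one_left_eq_Ioc]
      exact (Finset.sum_Ioc_consecutive c (by omega : t (p - 1) ≤ l - 1)
        (by omega : l - 1 ≤ t q')).symm
    -- split [l,r] at t q'
    have hsplit2 : ∑ j ∈ Finset.Icc l r, c j
        = (∑ j ∈ Finset.Icc l (t q'), c j) + ∑ j ∈ Finset.Icc (t q' + 1) r, c j := by
      have h1 : Finset.Icc l (t q') = Finset.Ioc (l - 1) (t q') := by
        rw [← Finset.Icc_add_one_left_eq_Ioc]; congr 1; omega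
      have h2 : Finset.Icc l r = Finset.Ioc (l - 1) r := by
        rw [← Finset.Icc_add_one_left_eq_Ioc]; congr 1; omega
      rw [h1, h2, Finset.Icc_add_one_left_eq_Ioc]
      exact (Finset.sum_Ioc_consecutive c (by omega : l - 1 ≤ t q') hq'r).symm
    -- bounds on the overhangs
    have hEL0 : 0 ≤ ∑ j ∈ Finset.Icc (t (p - 1) + 1) (l - 1), c j := by
      apply hsum_nonneg; intro j hj; simp only [Finset.mem_Icc] at hj ⊢; omega
    have hELD : ∑ j ∈ Finset.Icc (t (p - 1) + 1) (l - 1), c j ≤ D := by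
      refine le_trans ?_ (ha p (by simp only [Finset.mem_Icc]; omega))
      apply hsub
      · intro j hj
        simp only [Finset.mem_Icc] at hj
        simp only [Finset.mem_Ico]
        omega
      · intro j hj
        simp only [Finset.mem_Ico] at hj
        have := htpT p hpm
        simp only [Finset.mem_Icc]; omega
    have hTR0 : 0 ≤ ∑ j ∈ Finset.Icc (t q' + 1) r, c j := by
      apply hsum_nonneg; intro j hj; simp only [Finset.mem_Icc] at hj ⊢; omega
    have hTRD : ∑ j ∈ Finset.Icc (t q' + 1) r, c j ≤ D := by
      rcases Nat.lt_or_ge q' (m - 1) with h | h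
      · -- q' < m-1, so q' = q and r < t (q'+1)
        have hq'eq : q' = q := by omega
        have hrlt : r < t (q' + 1) := by
          rw [hq'eq]; exact hqgt (q + 1) (by omega) (by omega)
        refine le_trans ?_ (ha (q' + 1) (by simp only [Finset.mem_Icc]; omega))
        simp only [Nat.add_sub_cancel]
        apply hsub
        · intro j hj
          simp only [Finset.mem_Icc] at hj
          simp only [Finset.mem_Ico]
          omega
        · intro j hj
          simp only [Finset.mem_Ico] at hj
          have := htpT (q' + 1) (by omega)
          simp only [Finset.mem_Icc]; omega
      · -- q' = m-1 : tail is inside the last group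
        have hq'eq : q' = m - 1 := by omega
        refine le_trans ?_ hb
        rw [hq'eq]
        apply hsub
        · intro j hj
          simp only [Finset.mem_Icc] at hj ⊢
          rw [htm]; omega
        · intro j hj
          simp only [Finset.mem_Icc] at hj ⊢
          rw [htm] at hj; omega
    have hM0 : 0 ≤ ∑ j ∈ Finset.Icc l (t q'), c j := by
      apply hsum_nonneg; intro j hj
      simp only [Finset.mem_Icc] at hj ⊢
      have := htpT q' hq'm
      omega
    -- ctil bounds
    have hlo : (1 - η) * ∑ i ∈ Finset.Icc p q',
        (∑ j ∈ Finset.Icc (t (i - 1) + 1) (t i), c j) ≤ ∑ i ∈ Finset.Icc p q', ctil i := by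
      rw [Finset.mul_sum]
      apply Finset.sum_le_sum
      intro i hi
      simp only [Finset.mem_Icc] at hi
      exact (hctil i (by simp only [Finset.mem_Icc]; omega)).1
    have hhi : ∑ i ∈ Finset.Icc p q', ctil i ≤ (1 + η) * ∑ i ∈ Finset.Icc p q',
        (∑ j ∈ Finset.Icc (t (i - 1) + 1) (t i), c j) := by
      rw [Finset.mul_sum]
      apply Finset.sum_le_sum
      intro i hi
      simp only [Finset.mem_Icc] at hi
      exact (hctil i (by simp only [Finset.mem_Icc]; omega)).2
    rw [hGeq] at hlo hhi
    rw [hsplit1] at hlo hhi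
    rw [hS, hsplit2]
    constructor
    · nlinarith [mul_nonneg (by linarith : (0:ℝ) ≤ 1 - η) hEL0,
        mul_nonneg hη0.le hTR0]
    · nlinarith [mul_nonneg (by linarith : (0:ℝ) ≤ 1 + η) hTR0,
        mul_nonneg hη0.le hEL0]
  · -- S empty: the chat sum is 0 and the c-sum over [l,r] is at most D
    have hempty : Finset.Icc p q' = ∅ := Finset.Icc_eq_empty (by omega)
    rw [hS, hempty, Finset.sum_empty]
    have hAD : ∑ j ∈ Finset.Icc l r, c j ≤ D := by
      rcases Nat.lt_or_ge p m with h | h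
      · -- p ≤ m-1, whole [l,r] inside interior of group p
        have hrp : r < t p := by
          have hqp : q < p := by omega
          exact hqgt p hqp hpm
        refine le_trans ?_ (ha p (by simp only [Finset.mem_Icc]; omega))
        apply hsub
        · intro j hj
          simp only [Finset.mem_Icc] at hj
          simp only [Finset.mem_Ico]; omega
        · intro j hj
          simp only [Finset.mem_Ico] at hj
          have := htm ▸ tmono p m hpm (le_refl m)
          simp only [Finset.mem_Icc]; omega
      · -- p = m, whole [l,r] inside last group
        have hpeq : p = m := by omega
        refine le_trans ?_ hb
        apply hsub
        · intro j hj
          simp only [Finset.mem_Icc] at hj ⊢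
          rw [htm]
          have hml : t (m - 1) < l := by rw [← hpeq]; exact hppred
          omega
        · intro j hj
          simp only [Finset.mem_Icc] at hj ⊢
          rw [htm] at hj; omega
    have hmul : 0 ≤ η * ∑ j ∈ Finset.Icc l r, c j := mul_nonneg hη0.le hA0
    constructor
    · have : (1 - η) * ∑ j ∈ Finset.Icc l r, c j
          = (∑ j ∈ Finset.Icc l r, c j) - η * ∑ j ∈ Finset.Icc l r, c j := by ring
      rw [this]; linarith
    · have : (1 + η) * ∑ j ∈ Finset.Icc l r, c j
          = (∑ j ∈ Finset.Icc l r, c j) + η * ∑ j ∈ Finset.Icc l r, c j := by ring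
      rw [this]; linarith
end
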